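/- arXiv:1704.07360 — 7 statements merged into one kernel-verified Lean document; each statement's English description precedes it below -/
import Mathlib

section
/- The function f : (0,∞) → ℝ defined by f(c) = ((1+c)/c)·(1 − log(1+c)/c) is strictly increasing on (0,∞). -/
open Real Set

lemma log_gt_aux (x : ℝ) (hx : 0 < x) : x / (1 + x) < Real.log (1 + x) := by
  have h1 : (0:ℝ) < 1 + x := by linarith
  have h := Real.log_lt_sub_one_of_pos (x := 1/(1+x)) (by positivity)
    (by intro h; field_simp at h; linarith)
  rw [Real.log_div one_ne_zero h1.ne', Real.log_one] at h
  have h2 : 1/(1+x) - 1 = -(x/(1+x)) := by field_simp; ring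
  linarith

lemma key_aux (c : ℝ) (hc : 0 < c) : 2*c < (c+2) * Real.log (1+c) := by
  have h : StrictMonoOn (fun c : ℝ => (c+2)*Real.log (1+c) - 2*c) (Set.Ici 0) := by
    have hd : ∀ x : ℝ, 0 < x → HasDerivAt (fun c : ℝ => (c+2)*Real.log (1+c) - 2*c)
        (Real.log (1+x) + (x+2)/(1+x) - 2) x := by
      intro x hx
      have h1 : (0:ℝ) < 1 + x := by linarith
      have hl : HasDerivAt (fun c : ℝ => Real.log (1+c)) ((1+x)⁻¹ * (0+1)) x :=
        (Real.hasDerivAt_log h1.ne').comp x ((hasDerivAt_const x (1:ℝ)).add (hasDerivAt_id x))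
      have := (((hasDerivAt_id x).add (hasDerivAt_const x 2)).mul hl).sub
        ((hasDerivAt_id x).const_mul 2)
      refine this.congr_deriv ?_
      simp only [Pi.add_apply, id]
      field_simp
      ring
    apply strictMonoOn_of_deriv_pos (convex_Ici 0)
    · apply ContinuousOn.sub
      · apply ContinuousOn.mul (by fun_prop)
        apply ContinuousOn.log (by fun_prop)
        intro x hx
        simp only [mem_Ici] at hx
        positivity
      · fun_prop
    · intro x hx
      rw [interior_Ici] at hx
      have hx : 0 < x := hx
      have h1 : (0:ℝ) < 1 + x := by linarith
      rw [(hd x hx).deriv]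
      have := log_gt_aux x hx
      have h2 : (x+2)/(1+x) - 2 = -(x/(1+x)) := by field_simp; ring
      linarith
  have := h (Set.self_mem_Ici) (le_of_lt hc : (0:ℝ) ≤ c) hc
  simp only [Real.log_one, add_zero, mul_zero, zero_add] at this
  nlinarith [this]

/-- The function `f(c) = ((1+c)/c) * (1 - log(1+c)/c)` is strictly increasing on `(0, ∞)`. -/
theorem stmt0 :
    StrictMonoOn (fun c : ℝ => ((1 + c) / c) * (1 - Real.log (1 + c) / c)) (Set.Ioi 0) := by
  have hd : ∀ x : ℝ, 0 < x → HasDerivAt (fun c : ℝ => ((1 + c) / c) * (1 - Real.log (1 + c) / c))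
      (((x+2) * Real.log (1+x) - 2*x) / x^3) x := by
    intro x hx
    have h1 : (0:ℝ) < 1 + x := by linarith
    have hu : HasDerivAt (fun c : ℝ => (1+c)/c) (((0+1)*x - (1+x)*1)/x^2) x :=
      ((hasDerivAt_const x (1:ℝ)).add (hasDerivAt_id x)).div (hasDerivAt_id x) hx.ne'
    have hl : HasDerivAt (fun c : ℝ => Real.log (1+c)) ((1+x)⁻¹ * (0+1)) x :=
      (Real.hasDerivAt_log h1.ne').comp x ((hasDerivAt_const x (1:ℝ)).add (hasDerivAt_id x))
    have hv : HasDerivAt (fun c : ℝ => 1 - Real.log (1+c)/c)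
        (0 - (((1+x)⁻¹ * (0+1))*x - Real.log (1+x)*1)/x^2) x :=
      (hasDerivAt_const x (1:ℝ)).sub (hl.div (hasDerivAt_id x) hx.ne')
    have := hu.mul hv
    refine this.congr_deriv ?_
    field_simp
    ring
  apply strictMonoOn_of_deriv_pos (convex_Ioi 0)
  · intro x hx
    exact (hd x hx).differentiableAt.continuousAt.continuousWithinAt
  · intro x hx
    rw [interior_Ioi] at hx
    have hx : 0 < x := hx
    rw [(hd x hx).deriv]
    have := key_aux x hx
    have : 0 < (x+2) * Real.log (1+x) - 2*x := by linarith
    positivity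
end

section
/- The function g : (0,∞) → ℝ defined by g(c) = √(1+c)·log(1+c)/c is strictly decreasing on (0,∞). -/
lemma aux_log_lb (c : ℝ) (hc : 0 < c) : c / (1 + c) < Real.log (1 + c) := by
  have h1 : (0:ℝ) < 1 + c := by linarith
  have h2 : (1:ℝ)/(1+c) ≠ 1 := by
    intro h
    have : (1:ℝ) = 1 + c := by field_simp at h; linarith
    linarith
  have := Real.log_lt_sub_one_of_pos (x := 1/(1+c)) (by positivity) h2
  rw [Real.log_div one_ne_zero (ne_of_gt h1), Real.log_one] at this
  have : 1 - 1/(1+c) < Real.log (1+c) := by linarith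
  calc c / (1+c) = 1 - 1/(1+c) := by field_simp; ring
    _ < Real.log (1+c) := this

lemma aux_key (c : ℝ) (hc : 0 < c) : 2 * c < (2 + c) * Real.log (1 + c) := by
  have hmono : StrictMonoOn (fun x : ℝ => (2+x) * Real.log (1+x) - 2*x) (Set.Ici 0) := by
    have hd : ∀ x ∈ Set.Ioi (0:ℝ),
        HasDerivAt (fun x : ℝ => (2+x) * Real.log (1+x) - 2*x)
          (1 * Real.log (1+x) + (2+x) * (1/(1+x)) - 2*1) x := by
      intro x hx
      have hx0 : (0:ℝ) < x := hx
      have h1x : (1:ℝ) + x ≠ 0 := by positivity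
      have hlog : HasDerivAt (fun x : ℝ => Real.log (1+x)) (1/(1+x)) x :=
        ((hasDerivAt_id x).const_add 1).log h1x
      exact ((((hasDerivAt_id x).const_add 2).mul hlog).sub
        ((hasDerivAt_id x).const_mul 2))
    apply strictMonoOn_of_deriv_pos (convex_Ici 0)
    · apply ContinuousOn.sub
      · apply ContinuousOn.mul (by fun_prop)
        intro x hx
        have : (1:ℝ) + x ≠ 0 := by simp at hx; positivity
        exact (Real.continuousAt_log (by simpa using this)).comp
          (by fun_prop) |>.continuousWithinAt
      · fun_prop
    · intro x hx
      rw [interior_Ici] at hx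
      rw [(hd x hx).deriv]
      have hx0 : (0:ℝ) < x := hx
      have h1x : (0:ℝ) < 1 + x := by linarith
      have := aux_log_lb x hx0
      have h2 : x / (1+x) = 2*1 - (2+x)*(1/(1+x)) := by field_simp; ring
      nlinarith
  have := hmono (Set.self_mem_Ici) (Set.mem_Ici.mpr hc.le) hc
  simp at this
  linarith

/-- The function `g(c) = √(1+c)·log(1+c)/c` is strictly decreasing on `(0, ∞)`. -/
theorem stmt6 :
    StrictAntiOn (fun c : ℝ => Real.sqrt (1 + c) * Real.log (1 + c) / c) (Set.Ioi 0) := by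
  have hd : ∀ c ∈ Set.Ioi (0:ℝ),
      HasDerivAt (fun c : ℝ => Real.sqrt (1 + c) * Real.log (1 + c) / c)
        (((1/(2*Real.sqrt (1+c)) * Real.log (1+c) + Real.sqrt (1+c) * (1/(1+c))) * c
          - Real.sqrt (1+c) * Real.log (1+c) * 1) / c^2) c := by
    intro c hc
    have hc0 : (0:ℝ) < c := hc
    have h1c : (0:ℝ) < 1 + c := by linarith
    have hS : HasDerivAt (fun c : ℝ => Real.sqrt (1+c)) (1/(2*Real.sqrt (1+c))) c := by
      have := ((hasDerivAt_id c).const_add 1).sqrt (ne_of_gt h1c)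
      simpa using this
    have hL : HasDerivAt (fun c : ℝ => Real.log (1+c)) (1/(1+c)) c :=
      ((hasDerivAt_id c).const_add 1).log (ne_of_gt h1c)
    exact (hS.mul hL).div (hasDerivAt_id c) (ne_of_gt hc0)
  apply strictAntiOn_of_deriv_neg (convex_Ioi 0)
  · exact fun c hc => ((hd c hc).continuousAt).continuousWithinAt
  · intro c hc
    rw [interior_Ioi] at hc
    rw [(hd c hc).deriv]
    have hc0 : (0:ℝ) < c := hc
    have h1c : (0:ℝ) < 1 + c := by linarith
    set S := Real.sqrt (1+c) with hSdef
    have hS0 : 0 < S := Real.sqrt_pos.mpr h1c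
    have hS2 : S^2 = 1 + c := Real.sq_sqrt h1c.le
    set L := Real.log (1+c) with hLdef
    have hkey : 2 * c < (2 + c) * L := aux_key c hc0
    apply div_neg_of_neg_of_pos _ (by positivity)
    have hnum : ((1/(2*S) * L + S * (1/(1+c))) * c - S * L * 1) * (2*S)
        = 2*c - (2+c)*L := by
      field_simp
      linear_combination (2*c - 2*L*(1+c)) * hS2
    nlinarith [mul_pos hS0 hS0]
end

section
/- The function α ↦ w_α is continuous and strictly decreasing on the interval (0,1/2). -/
open Real Set

private lemma key_ineq {u : ℝ} (hu : 1 < u) : 2 * (u - 1) < (u + 1) * Real.log u := by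
  set h : ℝ → ℝ := fun x => Real.log x - 2 * ((x - 1) / (x + 1)) with hh
  have hd : ∀ x ∈ Set.Ici (1:ℝ), HasDerivAt h
      (x⁻¹ - 2 * ((1 * (x + 1) - (x - 1) * 1) / (x + 1) ^ 2)) x := by
    intro x hx
    have hx0 : x ≠ 0 := by simp only [mem_Ici] at hx; linarith
    have hx1 : x + 1 ≠ 0 := by simp only [mem_Ici] at hx; linarith
    have h1 : HasDerivAt (fun x : ℝ => (x - 1) / (x + 1))
        ((1 * (x + 1) - (x - 1) * 1) / (x + 1) ^ 2) x :=
      ((hasDerivAt_id x).sub_const 1).div ((hasDerivAt_id x).add_const 1) hx1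
    exact (Real.hasDerivAt_log hx0).sub (h1.const_mul 2)
  have hmono : StrictMonoOn h (Set.Ici 1) := by
    apply strictMonoOn_of_deriv_pos (convex_Ici 1)
    · exact fun x hx => (hd x hx).continuousAt.continuousWithinAt
    · intro x hx
      rw [interior_Ici] at hx
      rw [(hd x (mem_Ici.mpr (le_of_lt (mem_Ioi.mp hx)))).deriv]
      have hx0 : (0:ℝ) < x := by linarith [mem_Ioi.mp hx]
      have hx1 : (0:ℝ) < (x + 1) ^ 2 := by positivity
      have : (1:ℝ) * (x + 1) - (x - 1) * 1 = 2 := by ring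
      rw [this, sub_pos]
      have h4 : 2 * ((2:ℝ) / (x + 1) ^ 2) = 4 / (x + 1) ^ 2 := by ring
      rw [h4, inv_eq_one_div, div_lt_div_iff₀ hx1 hx0]
      have hx2 : (1:ℝ) < x := mem_Ioi.mp hx
      nlinarith [sq_nonneg (x - 1)]
  have h1 : h 1 = 0 := by simp [hh]
  have := hmono (Set.self_mem_Ici) (mem_Ici.mpr hu.le) hu
  rw [h1] at this
  have hpos : (0:ℝ) < u + 1 := by linarith
  have this2 : (0:ℝ) < Real.log u - 2 * ((u - 1) / (u + 1)) := this
  have : 2 * ((u - 1) / (u + 1)) < Real.log u := by linarith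
  calc 2 * (u - 1) = 2 * ((u - 1) / (u + 1)) * (u + 1) := by field_simp
    _ < Real.log u * (u + 1) := by exact mul_lt_mul_of_pos_right this hpos
    _ = (u + 1) * Real.log u := by ring

private lemma g_anti : StrictAntiOn (fun u : ℝ => Real.sqrt u * Real.log u / (u - 1))
    (Set.Ioi 1) := by
  have hd : ∀ x ∈ Set.Ioi (1:ℝ),
      HasDerivAt (fun u : ℝ => Real.sqrt u * Real.log u / (u - 1))
      (((1 / (2 * Real.sqrt x) * Real.log x + Real.sqrt x * x⁻¹) * (x - 1)
        - Real.sqrt x * Real.log x * 1) / (x - 1) ^ 2) x := by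
    intro x hx
    have hx1 : (1:ℝ) < x := hx
    have hx0 : x ≠ 0 := by linarith
    have hxs : x - 1 ≠ 0 := sub_ne_zero.mpr (by linarith)
    exact ((Real.hasDerivAt_sqrt hx0).mul (Real.hasDerivAt_log hx0)).div
      ((hasDerivAt_id x).sub_const 1) hxs
  apply strictAntiOn_of_deriv_neg (convex_Ioi 1)
  · exact fun x hx => (hd x hx).continuousAt.continuousWithinAt
  · intro x hx
    rw [interior_Ioi] at hx
    rw [(hd x hx).deriv]
    have hx1 : (1:ℝ) < x := hx
    have hxpos : (0:ℝ) < x := by linarith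
    have hs : (0:ℝ) < Real.sqrt x := Real.sqrt_pos.mpr hxpos
    have hsq : Real.sqrt x * Real.sqrt x = x := Real.mul_self_sqrt hxpos.le
    have hN : (1 / (2 * Real.sqrt x) * Real.log x + Real.sqrt x * x⁻¹) * (x - 1)
        - Real.sqrt x * Real.log x * 1
        = (2 * (x - 1) - (x + 1) * Real.log x) / (2 * Real.sqrt x) := by
      rw [eq_div_iff (by positivity)]
      field_simp
      linear_combination (2 * (x - 1 - x * Real.log x)) * hsq
    rw [hN]
    apply div_neg_of_neg_of_pos
    · apply div_neg_of_neg_of_pos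
      · linarith [key_ineq hx1]
      · positivity
    · exact pow_pos (by linarith) 2

private noncomputable def Ffun (x : ℝ) : ℝ := ((1 + x) / x) * (1 - Real.log (1 + x) / x)

private lemma F_mono : StrictMonoOn Ffun (Set.Ioi 0) := by
  show StrictMonoOn (fun c : ℝ => ((1 + c) / c) * (1 - Real.log (1 + c) / c)) (Set.Ioi 0)
  have hd : ∀ x ∈ Set.Ioi (0:ℝ),
      HasDerivAt (fun c : ℝ => ((1 + c) / c) * (1 - Real.log (1 + c) / c))
      ((1 * x - (1 + x) * 1) / x ^ 2 * (1 - Real.log (1 + x) / x)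
        + (1 + x) / x * (-((1 / (1 + x) * x - Real.log (1 + x) * 1) / x ^ 2))) x := by
    intro x hx
    have hx0 : x ≠ 0 := ne_of_gt hx
    have h1x : (1:ℝ) + x ≠ 0 := by have : (0:ℝ) < x := hx; linarith
    have hA : HasDerivAt (fun c : ℝ => (1 + c) / c) ((1 * x - (1 + x) * 1) / x ^ 2) x :=
      ((hasDerivAt_id x).const_add 1).div (hasDerivAt_id x) hx0
    have hlog : HasDerivAt (fun c : ℝ => Real.log (1 + c)) (1 / (1 + x)) x :=
      ((hasDerivAt_id x).const_add 1).log h1x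
    have hB : HasDerivAt (fun c : ℝ => 1 - Real.log (1 + c) / c)
        (-((1 / (1 + x) * x - Real.log (1 + x) * 1) / x ^ 2)) x :=
      (hlog.div (hasDerivAt_id x) hx0).const_sub 1
    exact hA.mul hB
  apply strictMonoOn_of_deriv_pos (convex_Ioi 0)
  · exact fun x hx => (hd x hx).continuousAt.continuousWithinAt
  · intro x hx
    rw [interior_Ioi] at hx
    rw [(hd x hx).deriv]
    have hxpos : (0:ℝ) < x := hx
    have h1x : (0:ℝ) < 1 + x := by linarith
    have hD : (1 * x - (1 + x) * 1) / x ^ 2 * (1 - Real.log (1 + x) / x)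
        + (1 + x) / x * (-((1 / (1 + x) * x - Real.log (1 + x) * 1) / x ^ 2))
        = ((2 + x) * Real.log (1 + x) - 2 * x) / x ^ 3 := by
      field_simp
      ring
    rw [hD]
    apply div_pos
    · have := key_ineq (show (1:ℝ) < 1 + x by linarith)
      have h2 : 2 * ((1 + x) - 1) = 2 * x := by ring
      have h3 : ((1 + x) + 1) = 2 + x := by ring
      rw [h2, h3] at this
      linarith
    · positivity

private lemma g_eval (x : ℝ) :
    (fun u : ℝ => Real.sqrt u * Real.log u / (u - 1)) (1 + x)
      = Real.sqrt (1 + x) * Real.log (1 + x) / x := by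
  have h : (1 + x) - 1 = x := by ring
  simp only [h]

/-- If `c α` denotes, for `α ∈ (0,1/2)`, the unique `c > 0` with
`((1+c)/c)·(1 − log(1+c)/c) = 1/2 + α`, then `w_α = √(1+c_α)·log(1+c_α)/c_α`
is continuous and strictly decreasing on `(0, 1/2)`. -/
theorem stmt7 (c : ℝ → ℝ)
    (hc : ∀ α ∈ Set.Ioo (0 : ℝ) (1 / 2), 0 < c α ∧
      ((1 + c α) / c α) * (1 - Real.log (1 + c α) / c α) = 1 / 2 + α) :
    ContinuousOn (fun α => Real.sqrt (1 + c α) * Real.log (1 + c α) / c α)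
        (Set.Ioo (0 : ℝ) (1 / 2)) ∧
    StrictAntiOn (fun α => Real.sqrt (1 + c α) * Real.log (1 + c α) / c α)
        (Set.Ioo (0 : ℝ) (1 / 2)) := by
  have hcF : ∀ α ∈ Set.Ioo (0 : ℝ) (1 / 2), Ffun (c α) = 1 / 2 + α :=
    fun α hα => (hc α hα).2
  have hkey : ∀ α ∈ Set.Ioo (0:ℝ) (1/2), ∀ β ∈ Set.Ioo (0:ℝ) (1/2), α < β → c α < c β := by
    intro α hα β hβ hab
    by_contra h
    push_neg at h
    have h2 := F_mono.monotoneOn (Set.mem_Ioi.mpr (hc β hβ).1)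
      (Set.mem_Ioi.mpr (hc α hα).1) h
    rw [hcF α hα, hcF β hβ] at h2
    linarith
  have hccont : ContinuousOn c (Set.Ioo (0:ℝ) (1/2)) := by
    rw [Metric.continuousOn_iff]
    intro a ha ε hε
    have hca := (hc a ha).1
    set ε' := min ε (c a / 2) with hε'def
    have hε'pos : 0 < ε' := lt_min hε (by linarith)
    have hε'le : ε' ≤ ε := min_le_left _ _
    have h1 : 0 < c a - ε' := by
      have : ε' ≤ c a / 2 := min_le_right _ _
      linarith
    have hlo : Ffun (c a - ε') < Ffun (c a) :=
      F_mono (Set.mem_Ioi.mpr h1) (Set.mem_Ioi.mpr hca) (by linarith)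
    have hhi : Ffun (c a) < Ffun (c a + ε') :=
      F_mono (Set.mem_Ioi.mpr hca) (Set.mem_Ioi.mpr (by linarith)) (by linarith)
    refine ⟨min (Ffun (c a + ε') - Ffun (c a)) (Ffun (c a) - Ffun (c a - ε')),
      lt_min (by linarith) (by linarith), ?_⟩
    intro b hb hdist
    have hcb := (hc b hb).1
    have hFa : Ffun (c a) = 1/2 + a := hcF a ha
    have hFb : Ffun (c b) = 1/2 + b := hcF b hb
    rw [Real.dist_eq] at hdist ⊢
    have habs := abs_lt.mp hdist
    have hd1 : min (Ffun (c a + ε') - Ffun (c a)) (Ffun (c a) - Ffun (c a - ε'))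
        ≤ Ffun (c a + ε') - Ffun (c a) := min_le_left _ _
    have hd2 : min (Ffun (c a + ε') - Ffun (c a)) (Ffun (c a) - Ffun (c a - ε'))
        ≤ Ffun (c a) - Ffun (c a - ε') := min_le_right _ _
    have h5 : b - a < Ffun (c a + ε') - Ffun (c a) := lt_of_lt_of_le habs.2 hd1
    have h6 : Ffun (c a - ε') - Ffun (c a) < b - a := by linarith [habs.1]
    have hub : Ffun (c b) < Ffun (c a + ε') := by
      rw [hFa] at h5; rw [hFb]; linarith
    have hlb : Ffun (c a - ε') < Ffun (c b) := by
      rw [hFa] at h6; rw [hFb]; linarith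
    have hcub : c b < c a + ε' := by
      by_contra h
      push_neg at h
      exact absurd (F_mono.monotoneOn (Set.mem_Ioi.mpr (by linarith : (0:ℝ) < c a + ε'))
        (Set.mem_Ioi.mpr hcb) h) (not_le.mpr hub)
    have hclb : c a - ε' < c b := by
      by_contra h
      push_neg at h
      exact absurd (F_mono.monotoneOn (Set.mem_Ioi.mpr hcb)
        (Set.mem_Ioi.mpr h1) h) (not_le.mpr hlb)
    rw [abs_lt]
    constructor <;> linarith
  constructor
  · have h1 : ContinuousOn (fun α => 1 + c α) (Set.Ioo (0:ℝ) (1/2)) :=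
      continuousOn_const.add hccont
    have hsqrt : ContinuousOn (fun α => Real.sqrt (1 + c α)) (Set.Ioo (0:ℝ) (1/2)) :=
      Real.continuous_sqrt.comp_continuousOn h1
    have hlog : ContinuousOn (fun α => Real.log (1 + c α)) (Set.Ioo (0:ℝ) (1/2)) :=
      h1.log (fun α hα => by have := (hc α hα).1; positivity)
    exact (hsqrt.mul hlog).div hccont (fun α hα => ne_of_gt (hc α hα).1)
  · intro α hα β hβ hab
    have hcab := hkey α hα β hβ hab
    have h1 : (1:ℝ) < 1 + c α := by linarith [(hc α hα).1]
    have h2 : (1:ℝ) < 1 + c β := by linarith [(hc β hβ).1]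
    have := g_anti (Set.mem_Ioi.mpr h1) (Set.mem_Ioi.mpr h2) (by linarith)
    rw [g_eval, g_eval] at this
    exact this
end

section
/- For every α ∈ (0,1/2) there exists a measure μ ∈ B_α attaining the supremum J_α, i.e. J(μ) = J_α. -/
open MeasureTheory

/-- The functional `J(μ) = ∫₀¹ √(dμ_ac/dλ)(x) dx`, where `dμ_ac/dλ` is the
Radon–Nikodym derivative (of the absolutely continuous part of `μ` in its Lebesgue
decomposition) with respect to Lebesgue measure. -/
noncomputable def Jfun (μ : Measure ℝ) : ℝ :=
  ∫ x in Set.Icc (0:ℝ) 1, Real.sqrt ((μ.rnDeriv volume x).toReal)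

/-- `μ ∈ B_α`: a Borel measure on `ℝ` concentrated on `[0,1]`, of total mass at most `1`,
satisfying the area constraint `∫₀¹ μ([0,x]) dx ≥ 1/2 + α`. -/
def memB (α : ℝ) (μ : Measure ℝ) : Prop :=
  μ (Set.Icc (0:ℝ) 1)ᶜ = 0 ∧ μ (Set.Icc (0:ℝ) 1) ≤ 1 ∧
    (1 / 2 + α) ≤ ∫ x in Set.Icc (0:ℝ) 1, (μ (Set.Icc 0 x)).toReal

/-- `J_α = sup_{μ ∈ B_α} J(μ)`. -/
noncomputable def Jsup (α : ℝ) : ℝ := ⨆ μ : {μ : Measure ℝ // memB α μ}, Jfun μ.1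

section Aux
set_option maxHeartbeats 1000000

section FTC
variable {b c : ℝ} (hb : 0 < b) (hc : 0 < c)

lemma pos_aff (hb : 0 < b) (hc : 0 < c) {x : ℝ} (hx : 0 ≤ x) : 0 < c + b * x :=
  add_pos_of_pos_of_nonneg hc (mul_nonneg hb.le hx)

-- ∫₀ᵘ (c+bx)⁻² = (1/b)(1/c - 1/(c+bu))
lemma ftc_sq (hb : 0 < b) (hc : 0 < c) {u : ℝ} (hu : 0 ≤ u) :
    ∫ x in (0:ℝ)..u, ((c + b * x)^2)⁻¹ = (1/b) * (1/c - 1/(c + b*u)) := by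
  have key : ∀ x ∈ Set.uIcc (0:ℝ) u,
      HasDerivAt (fun y => -(1/b) * (c + b*y)⁻¹) (((c + b*x)^2)⁻¹) x := by
    intro x hx
    rw [Set.uIcc_of_le hu] at hx
    have hpos := pos_aff hb hc hx.1
    have h1 : HasDerivAt (fun y : ℝ => c + b*y) b x := by
      exact (((hasDerivAt_id' x).const_mul b).const_add c).congr_deriv (mul_one b)
    have h2 : HasDerivAt (fun y : ℝ => (c + b*y)⁻¹) (-b / (c + b*x)^2) x := by
      exact h1.inv hpos.ne'
    have := h2.const_mul (-(1/b))
    refine this.congr_deriv ?_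
    field_simp
  have hcont : ContinuousOn (fun x => ((c + b * x)^2)⁻¹) (Set.uIcc 0 u) := by
    apply ContinuousOn.inv₀
    · fun_prop
    · intro x hx
      rw [Set.uIcc_of_le hu] at hx
      exact (pow_pos (pos_aff hb hc hx.1) 2).ne'
  rw [intervalIntegral.integral_eq_sub_of_hasDerivAt key (hcont.intervalIntegrable)]
  have hpu := pos_aff hb hc hu
  field_simp
  ring

-- ∫₀¹ (c+bx)⁻¹ = (log(c+b) - log c)/b
lemma ftc_inv (hb : 0 < b) (hc : 0 < c) :
    ∫ x in (0:ℝ)..1, (c + b * x)⁻¹ = (Real.log (c + b) - Real.log c) / b := by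
  have key : ∀ x ∈ Set.uIcc (0:ℝ) 1,
      HasDerivAt (fun y => Real.log (c + b*y) / b) ((c + b*x)⁻¹) x := by
    intro x hx
    rw [Set.uIcc_of_le zero_le_one] at hx
    have hpos := pos_aff hb hc hx.1
    have h1 : HasDerivAt (fun y : ℝ => c + b*y) b x := by
      exact (((hasDerivAt_id' x).const_mul b).const_add c).congr_deriv (mul_one b)
    have h2 := (h1.log hpos.ne').div_const b
    refine h2.congr_deriv ?_
    field_simp
  have hcont : ContinuousOn (fun x => (c + b * x)⁻¹) (Set.uIcc 0 1) := by
    apply ContinuousOn.inv₀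
    · fun_prop
    · intro x hx
      rw [Set.uIcc_of_le zero_le_one] at hx
      exact (pos_aff hb hc hx.1).ne'
  rw [intervalIntegral.integral_eq_sub_of_hasDerivAt key (hcont.intervalIntegrable)]
  simp [mul_zero, add_zero, sub_div]

-- ∫₀¹ x(c+bx)⁻² = (log(c+b) - log c + c/(c+b) - 1)/b²
lemma ftc_xsq (hb : 0 < b) (hc : 0 < c) :
    ∫ x in (0:ℝ)..1, x * ((c + b * x)^2)⁻¹ =
      (Real.log (c + b) - Real.log c + c/(c+b) - 1) / b^2 := by
  have key : ∀ x ∈ Set.uIcc (0:ℝ) 1,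
      HasDerivAt (fun y => (Real.log (c + b*y) + c * (c + b*y)⁻¹) / b^2)
        (x * ((c + b*x)^2)⁻¹) x := by
    intro x hx
    rw [Set.uIcc_of_le zero_le_one] at hx
    have hpos := pos_aff hb hc hx.1
    have h1 : HasDerivAt (fun y : ℝ => c + b*y) b x := by
      exact (((hasDerivAt_id' x).const_mul b).const_add c).congr_deriv (mul_one b)
    have h2 : HasDerivAt (fun y : ℝ => Real.log (c + b*y)) (b / (c + b*x)) x := h1.log hpos.ne'
    have h3 : HasDerivAt (fun y : ℝ => (c + b*y)⁻¹) (-b / (c + b*x)^2) x := by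
      exact h1.inv hpos.ne'
    have h4 := ((h2.add (h3.const_mul c)).div_const (b^2))
    refine h4.congr_deriv ?_
    field_simp
    ring
  have hcont : ContinuousOn (fun x => x * ((c + b * x)^2)⁻¹) (Set.uIcc 0 1) := by
    apply ContinuousOn.mul continuousOn_id
    apply ContinuousOn.inv₀
    · fun_prop
    · intro x hx
      rw [Set.uIcc_of_le zero_le_one] at hx
      exact (pow_pos (pos_aff hb hc hx.1) 2).ne'
  rw [intervalIntegral.integral_eq_sub_of_hasDerivAt key (hcont.intervalIntegrable)]
  have hp1 := pos_aff hb hc (zero_le_one (α := ℝ))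
  rw [mul_zero, mul_one, add_zero]
  field_simp
  ring
end FTC

noncomputable def cf (b : ℝ) : ℝ := (Real.sqrt (b^2+1) - b)/2

lemma cf_pos (b : ℝ) : 0 < cf b := by
  unfold cf
  have : b < Real.sqrt (b^2+1) := by
    rcases le_or_gt b 0 with h | h
    · exact h.trans_lt (Real.sqrt_pos.2 (by positivity))
    · nlinarith [Real.sq_sqrt (show (0:ℝ) ≤ b^2+1 by positivity),
        Real.sqrt_nonneg (b^2+1)]
  linarith

lemma cf_eq (b : ℝ) : 4 * cf b * (cf b + b) = 1 := by
  unfold cf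
  have h := Real.sq_sqrt (show (0:ℝ) ≤ b^2+1 by positivity)
  nlinarith

lemma cf_add_pos (b : ℝ) (hb : 0 ≤ b) : 0 < cf b + b :=
  add_pos_of_pos_of_nonneg (cf_pos b) hb

lemma cf_add_le (b : ℝ) (hb : 0 ≤ b) : cf b + b ≤ (1+2*b)/2 := by
  unfold cf
  have h : Real.sqrt (b^2+1) ≤ 1 + b := by
    have := Real.sqrt_le_sqrt (show b^2+1 ≤ (1+b)^2 by nlinarith)
    rwa [Real.sqrt_sq (by linarith)] at this
  linarith

lemma cf_ge (b : ℝ) (hb : 0 ≤ b) : 1/(2*(1+2*b)) ≤ cf b := by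
  have h1 := cf_eq b
  have h2 := cf_add_le b hb
  have h3 := cf_add_pos b hb
  have h5 : (0:ℝ) < 1+2*b := by linarith
  rw [div_le_iff₀ (by positivity)]
  nlinarith [cf_pos b]

noncomputable def Phi (b : ℝ) : ℝ :=
  (Real.log (cf b + b) - Real.log (cf b) + cf b/(cf b + b) - 1) / b^2

lemma pos_aff' {b c : ℝ} (hb : 0 < b) (hc : 0 < c) {x : ℝ} (hx : 0 ≤ x) : 0 < c + b * x :=
  add_pos_of_pos_of_nonneg hc (mul_nonneg hb.le hx)

lemma ftc_xsq' {b c : ℝ} (hb : 0 < b) (hc : 0 < c) :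
    ∫ x in (0:ℝ)..1, x * ((c + b * x)^2)⁻¹ =
      (Real.log (c + b) - Real.log c + c/(c+b) - 1) / b^2 := ftc_xsq hb hc

lemma Phi_int (b : ℝ) (hb : 0 < b) :
    Phi b = ∫ x in (0:ℝ)..1, x * ((cf b + b * x)^2)⁻¹ := by
  rw [ftc_xsq' hb (cf_pos b)]; rfl

lemma Phi_lb (b : ℝ) (hb : 0 < b) : 1/(2*(cf b + b)^2) ≤ Phi b := by
  rw [Phi_int b hb]
  have hc := cf_pos b
  have hca := cf_add_pos b hb.le
  have h1 : ∫ x in (0:ℝ)..1, x * ((cf b + b)^2)⁻¹ ≤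
      ∫ x in (0:ℝ)..1, x * ((cf b + b * x)^2)⁻¹ := by
    apply intervalIntegral.integral_mono_on zero_le_one
    · exact (continuousOn_id.mul continuousOn_const).intervalIntegrable
    · apply ContinuousOn.intervalIntegrable
      apply ContinuousOn.mul continuousOn_id
      apply ContinuousOn.inv₀ (by fun_prop)
      intro x hx
      rw [Set.uIcc_of_le zero_le_one] at hx
      exact (pow_pos (pos_aff' hb hc hx.1) 2).ne'
    · intro x hx
      apply mul_le_mul_of_nonneg_left _ hx.1
      have hpx := pos_aff' hb hc hx.1
      apply inv_anti₀ (pow_pos hpx 2)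
      have : cf b + b * x ≤ cf b + b := by nlinarith [hx.2, hx.1]
      nlinarith
  calc 1/(2*(cf b + b)^2) = ∫ x in (0:ℝ)..1, x * ((cf b + b)^2)⁻¹ := by
        rw [intervalIntegral.integral_mul_const, integral_id]
        field_simp
        norm_num
    _ ≤ _ := h1

lemma Phi_ub (b : ℝ) (hb : 0 < b) : Phi b ≤ 2*(1+2*b) / b^2 := by
  have hc := cf_pos b
  have hca := cf_add_pos b hb.le
  have h2b : (0:ℝ) < 1 + 2*b := by linarith
  have hy : (0:ℝ) < (cf b + b)/cf b := by positivity
  have hnum : Real.log (cf b + b) - Real.log (cf b) + cf b/(cf b + b) - 1 ≤ 2*(1+2*b) := by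
    have hlog : Real.log (cf b + b) - Real.log (cf b) = Real.log ((cf b + b)/cf b) := by
      rw [Real.log_div hca.ne' hc.ne']
    have hsq : Real.sqrt ((cf b + b)/cf b) ≤ 1 + 2*b := by
      have h1 : (cf b + b)/cf b ≤ (1+2*b)^2 := by
        rw [div_le_iff₀ hc]
        calc cf b + b ≤ (1+2*b)/2 := cf_add_le b hb.le
          _ = (1+2*b)^2 * (1/(2*(1+2*b))) := by field_simp
          _ ≤ (1+2*b)^2 * cf b :=
            mul_le_mul_of_nonneg_left (cf_ge b hb.le) (by positivity)
      calc Real.sqrt ((cf b + b)/cf b) ≤ Real.sqrt ((1+2*b)^2) := Real.sqrt_le_sqrt h1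
        _ = 1+2*b := Real.sqrt_sq (by linarith)
    have hlog2 : Real.log ((cf b + b)/cf b) ≤ 2*(1+2*b) := by
      have h1 : Real.log ((cf b + b)/cf b) = 2 * Real.log (Real.sqrt ((cf b + b)/cf b)) := by
        rw [Real.log_sqrt hy.le]; ring
      have h2 := Real.log_le_sub_one_of_pos (Real.sqrt_pos.2 hy)
      rw [h1]; nlinarith
    have hfr : cf b/(cf b + b) - 1 ≤ 0 := by
      rw [sub_nonpos, div_le_one hca]; linarith
    linarith [hlog ▸ hlog2]
  unfold Phi
  gcongr

lemma cf_continuous : Continuous cf := by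
  unfold cf
  fun_prop

lemma exists_bc (α : ℝ) (hα : α ∈ Set.Ioo (0:ℝ) (1/2)) :
    ∃ b c : ℝ, 0 < b ∧ 0 < c ∧ 4*c*(c+b) = 1 ∧
      Real.log (c+b) - Real.log c + c/(c+b) - 1 = (2-4*α)*b^2 := by
  obtain ⟨hα0, hα2⟩ := hα
  have h12 : (0:ℝ) < 1-2*α := by linarith
  set u : ℝ := 1/(1-2*α) with hu
  have hu1 : 1 < u := by rw [hu, lt_div_iff₀ h12]; linarith
  have hsr : 1 < Real.sqrt u := by
    rw [show (1:ℝ) = Real.sqrt 1 by simp]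
    exact Real.sqrt_lt_sqrt zero_le_one hu1
  set b₁ : ℝ := (Real.sqrt u - 1)/4 with hb₁
  set b₂ : ℝ := 1 + 3*u with hb₂
  have hb₁pos : 0 < b₁ := by rw [hb₁]; linarith
  have hsru : Real.sqrt u ≤ u := by
    nlinarith [Real.sq_sqrt (show (0:ℝ) ≤ u by positivity), Real.sqrt_nonneg u]
  have hb12 : b₁ < b₂ := by rw [hb₁, hb₂]; nlinarith
  have hb₂pos : 0 < b₂ := hb₁pos.trans hb12
  -- endpoint bounds
  have hPhi1 : 2-4*α < Phi b₁ := by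
    have hlb := Phi_lb b₁ hb₁pos
    have hca := cf_add_pos b₁ hb₁pos.le
    have h1 : 2*(cf b₁ + b₁) ≤ 1 + 2*b₁ := by linarith [cf_add_le b₁ hb₁pos.le]
    have h2 : 1 + 2*b₁ < Real.sqrt u := by rw [hb₁]; linarith
    have h3 : (2*(cf b₁ + b₁))^2 < u := by
      nlinarith [Real.sq_sqrt (show (0:ℝ) ≤ u by positivity)]
    have h4 : 2*(cf b₁ + b₁)^2 < 1/(2*(1-2*α)) := by
      rw [hu] at h3
      rw [lt_div_iff₀ (by linarith)]
      rw [lt_div_iff₀ h12] at h3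
      nlinarith
    have h5 : 2-4*α < 1/(2*(cf b₁ + b₁)^2) := by
      rw [lt_div_iff₀ (by positivity)]
      rw [lt_div_iff₀ (by linarith : (0:ℝ) < 2*(1-2*α))] at h4
      nlinarith
    linarith
  have hPhi2 : Phi b₂ < 2-4*α := by
    have hub := Phi_ub b₂ hb₂pos
    have h1 : 2*(1+2*b₂)/b₂^2 ≤ 6/b₂ := by
      rw [div_le_div_iff₀ (by positivity) (by positivity)]
      nlinarith
    have h2 : 6/b₂ < 2-4*α := by
      rw [div_lt_iff₀ hb₂pos]
      have : 2-4*α = 2/u := by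
        rw [hu]
        rw [eq_div_iff (by positivity)]
        field_simp
        ring
      rw [this, hb₂]
      have hup : 0 < u := by positivity
      rw [div_mul_eq_mul_div, lt_div_iff₀ hup]
      nlinarith
    linarith
  -- continuity
  have hcont : ContinuousOn Phi (Set.Icc b₁ b₂) := by
    unfold Phi
    have hbpos : ∀ x ∈ Set.Icc b₁ b₂, 0 < x := fun x hx => hb₁pos.trans_le hx.1
    apply ContinuousOn.div
    · apply ContinuousOn.sub
      apply ContinuousOn.add
      apply ContinuousOn.sub
      · apply ContinuousOn.log ((cf_continuous.add continuous_id).continuousOn)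
        intro x hx; exact (cf_add_pos x (hbpos x hx).le).ne'
      · apply ContinuousOn.log cf_continuous.continuousOn
        intro x hx; exact (cf_pos x).ne'
      · apply ContinuousOn.div cf_continuous.continuousOn
          ((cf_continuous.add continuous_id).continuousOn)
        intro x hx; exact (cf_add_pos x (hbpos x hx).le).ne'
      · exact continuousOn_const
    · fun_prop
    · intro x hx; exact (pow_pos (hbpos x hx) 2).ne'
  have hmem : (2-4*α) ∈ Set.Icc (Phi b₂) (Phi b₁) := ⟨hPhi2.le, hPhi1.le⟩
  obtain ⟨b, hbmem, hbeq⟩ := intermediate_value_Icc' hb12.le hcont hmem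
  refine ⟨b, cf b, hb₁pos.trans_le hbmem.1, cf_pos b, cf_eq b, ?_⟩
  have hbpos : 0 < b := hb₁pos.trans_le hbmem.1
  have : Phi b = 2-4*α := hbeq
  unfold Phi at this
  field_simp at this
  linarith [this]

section Mu0
variable {b c : ℝ}

lemma pos_aff2 (hb : 0 < b) (hc : 0 < c) {x : ℝ} (hx : 0 ≤ x) : 0 < c + b * x :=
  add_pos_of_pos_of_nonneg hc (mul_nonneg hb.le hx)

noncomputable def dens (b c : ℝ) (x : ℝ) : ℝ := (4*(c+b*x)^2)⁻¹

noncomputable def gdens (b c : ℝ) : ℝ → ENNReal :=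
  (Set.Icc (0:ℝ) 1).indicator (fun x => ENNReal.ofReal (dens b c x))

lemma gdens_meas : Measurable (gdens b c) := by
  apply Measurable.indicator _ measurableSet_Icc
  apply ENNReal.measurable_ofReal.comp
  unfold dens
  fun_prop

noncomputable def mu0 (b c : ℝ) : Measure ℝ := volume.withDensity (gdens b c)

lemma mu0_compl : mu0 b c (Set.Icc (0:ℝ) 1)ᶜ = 0 := by
  rw [mu0, withDensity_apply _ measurableSet_Icc.compl]
  unfold gdens
  rw [setLIntegral_congr_fun measurableSet_Icc.compl
    (fun x hx => Set.indicator_of_notMem hx _)]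
  simp

lemma ftc_sq2 (hb : 0 < b) (hc : 0 < c) {u : ℝ} (hu : 0 ≤ u) :
    ∫ x in (0:ℝ)..u, ((c + b * x)^2)⁻¹ = (1/b) * (1/c - 1/(c + b*u)) := ftc_sq hb hc hu
lemma ftc_inv2 (hb : 0 < b) (hc : 0 < c) :
    ∫ x in (0:ℝ)..1, (c + b * x)⁻¹ = (Real.log (c + b) - Real.log c) / b := ftc_inv hb hc

lemma dens_nonneg (x : ℝ) : 0 ≤ dens b c x := by unfold dens; positivity

lemma dens_intOn (hb : 0 < b) (hc : 0 < c) {u : ℝ} (hu : 0 ≤ u) :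
    IntegrableOn (dens b c) (Set.Icc 0 u) volume := by
  apply ContinuousOn.integrableOn_Icc
  unfold dens
  apply ContinuousOn.inv₀ (by fun_prop)
  intro x hx
  have := pos_aff2 hb hc hx.1
  positivity

lemma int_dens (hb : 0 < b) (hc : 0 < c) {u : ℝ} (hu : 0 ≤ u) :
    ∫ x in Set.Icc (0:ℝ) u, dens b c x = (1/(4*b)) * (1/c - 1/(c + b*u)) := by
  rw [integral_Icc_eq_integral_Ioc, ← intervalIntegral.integral_of_le hu]
  have : ∀ x, dens b c x = (1/4) * ((c+b*x)^2)⁻¹ := by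
    intro x; unfold dens; rw [mul_inv]; norm_num
  simp_rw [this]
  rw [intervalIntegral.integral_const_mul, ftc_sq2 hb hc hu]
  ring

lemma mu0_Icc (hb : 0 < b) (hc : 0 < c) {x : ℝ} (hx : x ∈ Set.Icc (0:ℝ) 1) :
    mu0 b c (Set.Icc 0 x) = ENNReal.ofReal ((1/(4*b)) * (1/c - 1/(c + b*x))) := by
  rw [mu0, withDensity_apply _ measurableSet_Icc]
  unfold gdens
  have hsub : Set.Icc (0:ℝ) x ⊆ Set.Icc 0 1 := Set.Icc_subset_Icc le_rfl hx.2
  rw [setLIntegral_congr_fun measurableSet_Icc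
    (fun t ht => Set.indicator_of_mem (hsub ht) _)]
  rw [← ofReal_integral_eq_lintegral_ofReal ((dens_intOn hb hc hx.1))
    (Filter.Eventually.of_forall dens_nonneg)]
  rw [int_dens hb hc hx.1]

lemma mu0_total (hb : 0 < b) (hc : 0 < c) (heq1 : 4*c*(c+b) = 1) :
    mu0 b c (Set.Icc (0:ℝ) 1) = 1 := by
  rw [mu0_Icc hb hc (Set.mem_Icc.2 ⟨zero_le_one, le_rfl⟩ : (1:ℝ) ∈ Set.Icc (0:ℝ) 1)]
  have hca : 0 < c + b := by nlinarith
  have hval : (1/(4*b)) * (1/c - 1/(c + b*1)) = 1 := by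
    rw [mul_one]
    field_simp
    nlinarith
  rw [hval, ENNReal.ofReal_one]

lemma mu0_area (hb : 0 < b) (hc : 0 < c) (heq1 : 4*c*(c+b) = 1) {α : ℝ}
    (heq2 : Real.log (c+b) - Real.log c + c/(c+b) - 1 = (2-4*α)*b^2) :
    ∫ x in Set.Icc (0:ℝ) 1, ((mu0 b c) (Set.Icc 0 x)).toReal = 1/2 + α := by
  have hca : 0 < c + b := by linarith [pos_aff2 hb hc (le_refl (0:ℝ))]
  have key : ∀ x ∈ Set.Icc (0:ℝ) 1,
      ((mu0 b c) (Set.Icc 0 x)).toReal = (1/(4*b)) * (1/c - 1/(c + b*x)) := by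
    intro x hx
    rw [mu0_Icc hb hc hx, ENNReal.toReal_ofReal]
    have h1 : 1/(c+b*x) ≤ 1/c := by
      apply one_div_le_one_div_of_le hc
      nlinarith [hx.1]
    have h2 : 0 ≤ 1/c - 1/(c + b*x) := by linarith
    positivity
  rw [setIntegral_congr_fun measurableSet_Icc key]
  rw [integral_Icc_eq_integral_Ioc, ← intervalIntegral.integral_of_le zero_le_one]
  have hrw : ∀ x : ℝ, (1/(4*b)) * (1/c - 1/(c + b*x))
      = (1/(4*b))*(1/c) - (1/(4*b))*(c+b*x)⁻¹ := by
    intro x; rw [one_div (c+b*x)]; ring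
  simp_rw [hrw]
  rw [intervalIntegral.integral_sub (intervalIntegrable_const)]
  swap
  · apply ContinuousOn.intervalIntegrable
    apply ContinuousOn.const_smul ?_ (1/(4*b)) |>.congr (fun x hx => rfl)
    apply ContinuousOn.inv₀ (by fun_prop)
    intro x hx
    rw [Set.uIcc_of_le zero_le_one] at hx
    exact (pos_aff2 hb hc hx.1).ne'
  rw [intervalIntegral.integral_const, intervalIntegral.integral_const_mul, ftc_inv2 hb hc]
  have hLval : Real.log (c+b) - Real.log c = (2-4*α)*b^2 - c/(c+b) + 1 := by linarith
  rw [hLval]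
  have hbne : b ≠ 0 := hb.ne'
  have hcne : c ≠ 0 := hc.ne'
  have hcane : c + b ≠ 0 := hca.ne'
  simp only [smul_eq_mul]
  field_simp
  linear_combination (-2*b^2) * heq1

lemma Jfun_mu0 (hb : 0 < b) (hc : 0 < c) :
    ∫ x in Set.Icc (0:ℝ) 1, Real.sqrt (((mu0 b c).rnDeriv volume x).toReal)
      = (Real.log (c+b) - Real.log c)/(2*b) := by
  have hrn := Measure.rnDeriv_withDensity volume (gdens_meas (b:=b) (c:=c))
  have hae : ∀ᵐ x ∂(volume.restrict (Set.Icc (0:ℝ) 1)),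
      Real.sqrt (((mu0 b c).rnDeriv volume x).toReal) = Real.sqrt ((gdens b c x).toReal) :=
    ae_restrict_of_ae (hrn.mono fun x hx => by rw [mu0] at *; rw [hx])
  rw [integral_congr_ae hae]
  have key : ∀ x ∈ Set.Icc (0:ℝ) 1,
      Real.sqrt ((gdens b c x).toReal) = (1/2) * (c+b*x)⁻¹ := by
    intro x hx
    have hpx := pos_aff2 hb hc hx.1
    rw [gdens, Set.indicator_of_mem hx, ENNReal.toReal_ofReal (dens_nonneg x)]
    rw [dens, show 4*(c+b*x)^2 = (2*(c+b*x))^2 by ring]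
    rw [Real.sqrt_inv, Real.sqrt_sq (by linarith)]
    rw [mul_inv]
    norm_num
  rw [setIntegral_congr_fun measurableSet_Icc key]
  rw [integral_Icc_eq_integral_Ioc, ← intervalIntegral.integral_of_le zero_le_one]
  rw [intervalIntegral.integral_const_mul, ftc_inv2 hb hc]
  ring
end Mu0


lemma pos_aff3 {b c : ℝ} (hb : 0 < b) (hc : 0 < c) {x : ℝ} (hx : 0 ≤ x) : 0 < c + b * x :=
  add_pos_of_pos_of_nonneg hc (mul_nonneg hb.le hx)

lemma ftc_inv3 {b c : ℝ} (hb : 0 < b) (hc : 0 < c) :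
    ∫ x in (0:ℝ)..1, (c + b * x)⁻¹ = (Real.log (c + b) - Real.log c) / b := ftc_inv hb hc

lemma Jfun_le {α b c : ℝ} (hb : 0 < b) (hc : 0 < c) (heq1 : 4*c*(c+b) = 1)
    (heq2 : Real.log (c+b) - Real.log c + c/(c+b) - 1 = (2-4*α)*b^2)
    (μ : Measure ℝ) (hμ : memB α μ) :
    Jfun μ ≤ (Real.log (c+b) - Real.log c)/(2*b) := by
  obtain ⟨hcompl, hmass, harea⟩ := hμ
  set I : Set ℝ := Set.Icc (0:ℝ) 1 with hI
  have hca : 0 < c + b := by nlinarith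
  have hIvol : volume I = 1 := by rw [hI, Real.volume_Icc]; norm_num
  -- μ is a finite measure
  have hμuniv : μ Set.univ ≤ 1 := by
    calc μ Set.univ = μ (I ∪ Iᶜ) := by rw [Set.union_compl_self]
      _ ≤ μ I + μ Iᶜ := measure_union_le _ _
      _ = μ I := by rw [hcompl, add_zero]
      _ ≤ 1 := hmass
  haveI hfin : IsFiniteMeasure μ :=
    ⟨lt_of_le_of_lt hμuniv ENNReal.one_lt_top⟩
  set F : ℝ → ENNReal := μ.rnDeriv volume with hF
  have hFmeas : Measurable F := μ.measurable_rnDeriv volume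
  have hFlt : ∀ᵐ x ∂volume, F x < ⊤ := μ.rnDeriv_lt_top volume
  set f : ℝ → ℝ := fun x => (F x).toReal with hf
  have hfmeas : Measurable f := hFmeas.ennreal_toReal
  have hfnn : ∀ x, 0 ≤ f x := fun x => ENNReal.toReal_nonneg
  have hfint : IntegrableOn f I volume :=
    (Measure.integrable_toReal_rnDeriv (μ := μ) (ν := volume)).integrableOn
  set ν : Measure ℝ := μ.singularPart volume with hν
  set m : ℝ := (ν I).toReal with hm
  have hνfin : ν I ≤ 1 := le_trans (Measure.singularPart_le μ volume I) hmass
  have hm0 : 0 ≤ m := ENNReal.toReal_nonneg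
  have hdecomp : ∀ s : Set ℝ, MeasurableSet s → μ s = ν s + ∫⁻ x in s, F x ∂volume := by
    intro s hs
    conv_lhs => rw [μ.haveLebesgueDecomposition_add volume]
    rw [Measure.add_apply, withDensity_apply _ hs]
  -- the lintegral of F over subsets of I is small
  have hFI : ∫⁻ x in I, F x ∂volume ≤ 1 := by
    have := hdecomp I measurableSet_Icc
    calc ∫⁻ x in I, F x ∂volume ≤ ν I + ∫⁻ x in I, F x ∂volume := le_add_self
      _ = μ I := (hdecomp I measurableSet_Icc).symm
      _ ≤ 1 := hmass
  set A : ℝ := ∫ x in I, f x with hA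
  set B : ℝ := ∫ x in I, (1-x) * f x with hB
  -- A as toReal of lintegral
  have hAeq : A = (∫⁻ x in I, F x ∂volume).toReal := by
    rw [hA]
    exact integral_toReal (hFmeas.aemeasurable.restrict) (ae_restrict_of_ae hFlt)
  -- Step 1 : A + m ≤ 1
  have hstep1 : A + m ≤ 1 := by
    have h1 : (μ I).toReal ≤ 1 := by
      have := ENNReal.toReal_mono (by norm_num) hmass
      simpa using this
    have h2 : (μ I).toReal = m + A := by
      rw [hdecomp I measurableSet_Icc, hAeq, ENNReal.toReal_add
        (lt_of_le_of_lt hνfin ENNReal.one_lt_top).ne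
        (lt_of_le_of_lt hFI ENNReal.one_lt_top).ne]
    linarith
  -- Step 2 : 1/2 + α ≤ B + m  (Fubini)
  have hstep2 : 1/2 + α ≤ B + m := by
    -- measurability of the CDF
    have hcdf_mono : Monotone (fun x => μ (Set.Icc 0 x)) :=
      fun x y hxy => measure_mono (Set.Icc_subset_Icc le_rfl hxy)
    have hcdf_meas : Measurable (fun x => μ (Set.Icc 0 x)) := hcdf_mono.measurable
    have hcdf_lt : ∀ᵐ x ∂(volume.restrict I), μ (Set.Icc 0 x) < ⊤ :=
      Filter.Eventually.of_forall fun x =>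
        lt_of_le_of_lt (le_trans (measure_mono (Set.subset_univ _)) hμuniv) ENNReal.one_lt_top
    have h0 : ∫ x in I, (μ (Set.Icc 0 x)).toReal = (∫⁻ x in I, μ (Set.Icc 0 x)).toReal :=
      integral_toReal hcdf_meas.aemeasurable.restrict hcdf_lt
    -- inner lintegral rewrite using decomposition, then Tonelli
    have hinner : ∀ x ∈ I, μ (Set.Icc 0 x) ≤ ν I + ∫⁻ t in I, F t * (if t ≤ x then 1 else 0) ∂volume := by
      intro x hx
      rw [hdecomp (Set.Icc 0 x) measurableSet_Icc]
      have hsub : Set.Icc (0:ℝ) x ⊆ I := Set.Icc_subset_Icc le_rfl hx.2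
      have h1 : ∫⁻ t in Set.Icc 0 x, F t ∂volume
          = ∫⁻ t in I, F t * (if t ≤ x then 1 else 0) ∂volume := by
        rw [← lintegral_indicator measurableSet_Icc]
        rw [← lintegral_indicator (measurableSet_Icc (a := (0:ℝ)) (b := 1))]
        congr 1
        ext t
        by_cases ht : t ∈ Set.Icc (0:ℝ) x
        · rw [Set.indicator_of_mem ht, Set.indicator_of_mem (hsub ht), if_pos ht.2, mul_one]
        · rw [Set.indicator_of_notMem ht]
          by_cases htI : t ∈ I
          · rw [Set.indicator_of_mem htI, if_neg, mul_zero]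
            intro hle
            exact ht ⟨htI.1, hle⟩
          · rw [Set.indicator_of_notMem htI]
      rw [h1]
      exact add_le_add (measure_mono hsub) le_rfl
    have hbig_meas : Measurable (fun x => ν I + ∫⁻ t in I, F t * (if t ≤ x then 1 else 0) ∂volume) := by
      apply Measurable.add measurable_const
      have : Monotone (fun x => ∫⁻ t in I, F t * (if t ≤ x then 1 else 0) ∂volume) := by
        intro x y hxy
        apply lintegral_mono
        intro t
        apply mul_le_mul_right
        by_cases h : t ≤ x
        · simp [h, h.trans hxy]
        · simp only [if_neg h]
          exact zero_le
      exact this.measurable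
    have h2 : ∫⁻ x in I, μ (Set.Icc 0 x)
        ≤ ∫⁻ x in I, (ν I + ∫⁻ t in I, F t * (if t ≤ x then 1 else 0) ∂volume) :=
      setLIntegral_mono hbig_meas hinner
    have h3 : ∫⁻ x in I, (ν I + ∫⁻ t in I, F t * (if t ≤ x then 1 else 0) ∂volume)
        = ν I + ∫⁻ x in I, ∫⁻ t in I, F t * (if t ≤ x then 1 else 0) ∂volume := by
      rw [lintegral_add_left measurable_const, setLIntegral_const, hIvol, mul_one]
    -- Tonelli swap
    have hswap : ∫⁻ x in I, ∫⁻ t in I, F t * (if t ≤ x then 1 else 0) ∂volume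
        = ∫⁻ t in I, ∫⁻ x in I, F t * (if t ≤ x then 1 else 0) ∂volume := by
      apply lintegral_lintegral_swap
      apply AEMeasurable.mul
      · exact (hFmeas.comp measurable_snd).aemeasurable
      · apply Measurable.aemeasurable
        exact Measurable.ite (measurableSet_le measurable_snd measurable_fst)
          measurable_const measurable_const
    have hxint : ∀ t ∈ I, ∫⁻ x in I, F t * (if t ≤ x then 1 else 0) ∂volume
        = F t * ENNReal.ofReal (1 - t) := by
      intro t ht
      have hrwite : ∀ x : ℝ, (if t ≤ x then (1:ENNReal) else 0) = (Set.Ici t).indicator (1 : ℝ → ENNReal) x := by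
        intro x
        by_cases h : t ≤ x
        · rw [if_pos h]
          exact (Set.indicator_of_mem (Set.mem_Ici.mpr h) (1 : ℝ → ENNReal)).symm
        · rw [if_neg h]
          exact (Set.indicator_of_notMem (by simpa using h) (1 : ℝ → ENNReal)).symm
      simp_rw [hrwite]
      rw [lintegral_const_mul _ (measurable_one.indicator measurableSet_Ici)]
      congr 1
      rw [lintegral_indicator measurableSet_Ici]
      rw [Measure.restrict_restrict measurableSet_Ici]
      have : Set.Ici t ∩ I = Set.Icc t 1 := by
        ext y
        simp only [Set.mem_inter_iff, Set.mem_Ici, Set.mem_Icc, hI]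
        constructor
        · rintro ⟨h1, h2, h3⟩; exact ⟨h1, h3⟩
        · rintro ⟨h1, h2⟩; exact ⟨h1, ht.1.trans h1, h2⟩
      rw [this]
      simp only [Pi.one_apply, lintegral_one, Measure.restrict_apply_univ, Real.volume_Icc]
    have h4 : ∫⁻ t in I, ∫⁻ x in I, F t * (if t ≤ x then 1 else 0) ∂volume
        = ∫⁻ t in I, F t * ENNReal.ofReal (1 - t) :=
      setLIntegral_congr_fun measurableSet_Icc hxint
    -- B as toReal of the lintegral
    have hBlt : ∫⁻ t in I, F t * ENNReal.ofReal (1 - t) ≤ 1 := by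
      calc ∫⁻ t in I, F t * ENNReal.ofReal (1 - t) ≤ ∫⁻ t in I, F t * 1 := by
            apply setLIntegral_mono (hFmeas.mul_const 1)
            intro t ht
            gcongr
            rw [hI] at ht
            exact ENNReal.ofReal_le_one.2 (by linarith [ht.1])
        _ = ∫⁻ t in I, F t := by simp
        _ ≤ 1 := hFI
    have hBeq : B = (∫⁻ t in I, F t * ENNReal.ofReal (1 - t)).toReal := by
      rw [hB]
      have hcong : ∀ᵐ t ∂(volume.restrict I),
          (1-t) * f t = (F t * ENNReal.ofReal (1 - t)).toReal := by
        filter_upwards [ae_restrict_of_ae hFlt, ae_restrict_mem measurableSet_Icc] with t hFt htI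
        rw [ENNReal.toReal_mul, ENNReal.toReal_ofReal (by rw [hI] at htI; linarith [htI.2] : 0 ≤ 1 - t)]
        exact mul_comm _ _
      rw [integral_congr_ae hcong]
      exact integral_toReal ((hFmeas.mul (ENNReal.measurable_ofReal.comp
        (measurable_const.sub measurable_id))).aemeasurable.restrict)
        (ae_restrict_of_ae (hFlt.mono fun t hFt =>
          ENNReal.mul_lt_top hFt ENNReal.ofReal_lt_top))
    have hfinRHS : ν I + ∫⁻ t in I, F t * ENNReal.ofReal (1 - t) ≠ ⊤ := by
      apply ne_of_lt
      calc ν I + ∫⁻ t in I, F t * ENNReal.ofReal (1 - t) ≤ 1 + 1 := add_le_add hνfin hBlt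
        _ < ⊤ := by norm_num
    have h5 : ∫⁻ x in I, μ (Set.Icc 0 x) ≤ ν I + ∫⁻ t in I, F t * ENNReal.ofReal (1 - t) := by
      calc ∫⁻ x in I, μ (Set.Icc 0 x)
          ≤ ∫⁻ x in I, (ν I + ∫⁻ t in I, F t * (if t ≤ x then 1 else 0) ∂volume) := h2
        _ = ν I + ∫⁻ x in I, ∫⁻ t in I, F t * (if t ≤ x then 1 else 0) ∂volume := h3
        _ = ν I + ∫⁻ t in I, F t * ENNReal.ofReal (1 - t) := by rw [hswap, h4]
    calc 1/2 + α ≤ ∫ x in I, (μ (Set.Icc 0 x)).toReal := harea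
      _ = (∫⁻ x in I, μ (Set.Icc 0 x)).toReal := h0
      _ ≤ (ν I + ∫⁻ t in I, F t * ENNReal.ofReal (1 - t)).toReal :=
          ENNReal.toReal_mono hfinRHS h5
      _ = m + B := by
          rw [ENNReal.toReal_add (lt_of_le_of_lt hνfin ENNReal.one_lt_top).ne
            (lt_of_le_of_lt hBlt ENNReal.one_lt_top).ne, hBeq]
      _ = B + m := add_comm m B
  -- Step 3 : tangent line bound pointwise
  have htan : ∀ x ∈ I, Real.sqrt (f x) ≤ (c + b*x) * f x + (1/4) * (c + b*x)⁻¹ := by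
    intro x hx
    rw [hI] at hx
    have hpx := pos_aff3 hb hc hx.1
    have hs := Real.sq_sqrt (hfnn x)
    have hsn := Real.sqrt_nonneg (f x)
    have key : 0 ≤ (2*(c+b*x)*Real.sqrt (f x) - 1)^2 := sq_nonneg _
    have h1 : 4*(c+b*x) * Real.sqrt (f x) ≤ 4*(c+b*x)^2 * f x + 1 := by nlinarith
    have h3 : (c + b*x) * f x + (1/4) * (c+b*x)⁻¹ - Real.sqrt (f x)
        = (4*(c+b*x)^2 * f x + 1 - 4*(c+b*x)*Real.sqrt (f x)) / (4*(c+b*x)) := by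
      field_simp
    have h5 : 0 ≤ (4*(c+b*x)^2 * f x + 1 - 4*(c+b*x)*Real.sqrt (f x)) / (4*(c+b*x)) :=
      div_nonneg (by linarith) (by linarith)
    linarith [h3 ▸ h5]
  -- integrability facts
  have haff_meas : Measurable (fun x : ℝ => c + b * x) := by fun_prop
  have hint1 : IntegrableOn (fun x => (c + b*x) * f x) I volume := by
    apply Integrable.mono (hfint.const_mul (c+b)) ((haff_meas.mul hfmeas).aestronglyMeasurable)
    filter_upwards [ae_restrict_mem measurableSet_Icc] with x hx
    rw [hI] at hx
    have hpx := pos_aff3 hb hc hx.1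
    simp only [Pi.mul_apply]
    rw [Real.norm_eq_abs, Real.norm_eq_abs, abs_of_nonneg (mul_nonneg hpx.le (hfnn x)),
      abs_of_nonneg (mul_nonneg (by linarith) (hfnn x))]
    have : c + b*x ≤ c + b := by nlinarith [hx.2]
    nlinarith [hfnn x]
  have hint2 : IntegrableOn (fun x => (1/4) * (c + b*x)⁻¹) I volume := by
    rw [hI]
    apply ContinuousOn.integrableOn_Icc
    apply ContinuousOn.const_smul ?_ ((1:ℝ)/4) |>.congr (fun x hx => rfl)
    apply ContinuousOn.inv₀ (by fun_prop : Continuous (fun x : ℝ => c + b*x)).continuousOn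
    intro x hx
    exact (pos_aff3 hb hc hx.1).ne'
  have hint1mx : IntegrableOn (fun x => (1-x) * f x) I volume := by
    apply Integrable.mono hfint ((by fun_prop : Measurable fun x : ℝ => (1-x) * f x).aestronglyMeasurable)
    filter_upwards [ae_restrict_mem measurableSet_Icc] with x hx
    rw [hI] at hx
    rw [Real.norm_eq_abs, Real.norm_eq_abs, abs_of_nonneg (mul_nonneg (by linarith [hx.2]) (hfnn x)),
      abs_of_nonneg (hfnn x)]
    nlinarith [hfnn x, hx.1, hx.2]
  have hsqint : IntegrableOn (fun x => Real.sqrt (f x)) I volume := by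
    apply Integrable.mono (hint1.add hint2)
      ((Measurable.sqrt hfmeas).aestronglyMeasurable)
    filter_upwards [ae_restrict_mem measurableSet_Icc] with x hx
    rw [Real.norm_eq_abs, abs_of_nonneg (Real.sqrt_nonneg _), Real.norm_eq_abs]
    exact (htan x hx).trans (le_abs_self _)
  -- combine
  have hJ : Jfun μ ≤ ∫ x in I, ((c + b*x) * f x + (1/4) * (c + b*x)⁻¹) := by
    rw [Jfun]
    exact setIntegral_mono_on hsqint (hint1.add hint2) measurableSet_Icc htan
  have hsplit : ∫ x in I, ((c + b*x) * f x + (1/4) * (c + b*x)⁻¹)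
      = (∫ x in I, (c + b*x) * f x) + ∫ x in I, (1/4) * (c + b*x)⁻¹ :=
    integral_add hint1 hint2
  have hlin : ∫ x in I, (c + b*x) * f x = (c+b) * A - b * B := by
    have hrw : ∀ x : ℝ, (c + b*x) * f x = (c+b) * f x - b * ((1-x) * f x) := fun x => by ring
    simp_rw [hrw]
    rw [integral_sub (hfint.const_mul (c+b)) (hint1mx.const_mul b),
      MeasureTheory.integral_const_mul, MeasureTheory.integral_const_mul]
  have hval2 : ∫ x in I, (1/4) * (c + b*x)⁻¹ = (Real.log (c+b) - Real.log c)/(4*b) := by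
    rw [hI, integral_Icc_eq_integral_Ioc, ← intervalIntegral.integral_of_le zero_le_one,
      intervalIntegral.integral_const_mul, ftc_inv3 hb hc]
    ring
  have hABm : (c+b)*A - b*B ≤ c + b*(1/2 - α) := by
    have P1 : (c+b)*A ≤ (c+b)*(1-m) := mul_le_mul_of_nonneg_left (by linarith) hca.le
    have P2 : b*(1/2+α-m) ≤ b*B := mul_le_mul_of_nonneg_left (by linarith) hb.le
    have P3 : 0 ≤ c*m := mul_nonneg hc.le hm0
    nlinarith
  have halg : c + b*(1/2 - α) + (Real.log (c+b) - Real.log c)/(4*b)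
      = (Real.log (c+b) - Real.log c)/(2*b) := by
    have hLval : Real.log (c+b) - Real.log c = (2-4*α)*b^2 - c/(c+b) + 1 := by linarith
    rw [hLval]
    field_simp
    linear_combination (2*b) * heq1
  calc Jfun μ ≤ ∫ x in I, ((c + b*x) * f x + (1/4) * (c + b*x)⁻¹) := hJ
    _ = (c+b) * A - b * B + (Real.log (c+b) - Real.log c)/(4*b) := by
        rw [hsplit, hlin, hval2]
    _ ≤ c + b*(1/2 - α) + (Real.log (c+b) - Real.log c)/(4*b) := by linarith
    _ = (Real.log (c+b) - Real.log c)/(2*b) := halg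

end Aux

/-- For every `α ∈ (0,1/2)` there exists a measure `μ ∈ B_α` attaining the supremum `J_α`. -/
theorem stmt8 (α : ℝ) (hα : α ∈ Set.Ioo (0 : ℝ) (1 / 2)) :
    ∃ μ : Measure ℝ, memB α μ ∧ Jfun μ = Jsup α := by
  obtain ⟨b, c, hb, hc, heq1, heq2⟩ := exists_bc α hα
  have hmem : memB α (mu0 b c) := by
    refine ⟨mu0_compl, ?_, ?_⟩
    · rw [mu0_total hb hc heq1]
    · rw [mu0_area hb hc heq1 heq2]
  have hval : Jfun (mu0 b c) = (Real.log (c+b) - Real.log c)/(2*b) := by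
    rw [Jfun]
    exact Jfun_mu0 hb hc
  have hub : ∀ p : {μ : Measure ℝ // memB α μ},
      Jfun p.1 ≤ (Real.log (c+b) - Real.log c)/(2*b) :=
    fun p => Jfun_le hb hc heq1 heq2 p.1 p.2
  haveI : Nonempty {μ : Measure ℝ // memB α μ} := ⟨⟨mu0 b c, hmem⟩⟩
  have hbdd : BddAbove (Set.range fun p : {μ : Measure ℝ // memB α μ} => Jfun p.1) := by
    refine ⟨(Real.log (c+b) - Real.log c)/(2*b), ?_⟩
    rintro y ⟨p, rfl⟩
    exact hub p
  refine ⟨mu0 b c, hmem, le_antisymm ?_ ?_⟩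
  · exact le_ciSup hbdd (⟨mu0 b c, hmem⟩ : {μ : Measure ℝ // memB α μ})
  · rw [Jsup, hval]
    exact ciSup_le hub
end

section
/- Let μ ∈ B_α satisfy J(μ) = J_α. Then μ is a probability measure (μ([0,1]) = 1) which is absolutely continuous with respect to Lebesgue measure on [0,1]. -/
open MeasureTheory

open Set
open scoped ENNReal

lemma aux_univ {μ : Measure ℝ} (h0 : μ (Icc (0:ℝ) 1)ᶜ = 0) :
    μ Set.univ = μ (Icc (0:ℝ) 1) := by
  rw [← measure_add_measure_compl (measurableSet_Icc (a := (0:ℝ)) (b := 1)), h0, add_zero]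

lemma aux_fin {α : ℝ} {μ : Measure ℝ} (hμ : memB α μ) : IsFiniteMeasure μ :=
  ⟨by rw [aux_univ hμ.1]; exact lt_of_le_of_lt hμ.2.1 ENNReal.one_lt_top⟩

lemma integrable_cdf (ρ : Measure ℝ) [IsFiniteMeasure ρ] :
    IntegrableOn (fun x => (ρ (Icc 0 x)).toReal) (Icc (0:ℝ) 1) volume := by
  apply MonotoneOn.integrableOn_isCompact isCompact_Icc
  intro x _ y _ hxy
  exact ENNReal.toReal_mono (measure_ne_top ρ _) (measure_mono (Icc_subset_Icc_right hxy))

lemma sqrt_le_half (t : ℝ) (ht : 0 ≤ t) : Real.sqrt t ≤ (1 + t) / 2 := by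
  nlinarith [Real.sq_sqrt ht, Real.sqrt_nonneg t, sq_nonneg (Real.sqrt t - 1)]

lemma sqrt_toReal_integrable (μ : Measure ℝ) [IsFiniteMeasure μ] :
    IntegrableOn (fun x => Real.sqrt ((μ.rnDeriv volume x).toReal)) (Icc (0:ℝ) 1) volume := by
  have hint : IntegrableOn (fun x => ((μ.rnDeriv volume x).toReal)) (Icc (0:ℝ) 1) volume :=
    (Measure.integrable_toReal_rnDeriv).integrableOn
  have hmeas : AEStronglyMeasurable (fun x => Real.sqrt ((μ.rnDeriv volume x).toReal))
      (volume.restrict (Icc (0:ℝ) 1)) :=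
    (Real.continuous_sqrt.measurable.comp
      (μ.measurable_rnDeriv volume).ennreal_toReal).aestronglyMeasurable
  refine Integrable.mono' (g := fun x => (1 + (μ.rnDeriv volume x).toReal)/2)
    (((integrable_const 1).add hint).div_const 2) hmeas ?_
  filter_upwards with x
  rw [Real.norm_eq_abs, abs_of_nonneg (Real.sqrt_nonneg _)]
  exact sqrt_le_half _ ENNReal.toReal_nonneg

lemma Jfun_nonneg (μ : Measure ℝ) : 0 ≤ Jfun μ :=
  setIntegral_nonneg measurableSet_Icc (fun x _ => Real.sqrt_nonneg _)

lemma Jfun_le_one {α : ℝ} {μ : Measure ℝ} (hμ : memB α μ) : Jfun μ ≤ 1 := by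
  haveI : IsFiniteMeasure μ := aux_fin hμ
  have h1 : ∫ x in Icc (0:ℝ) 1, (μ.rnDeriv volume x).toReal ≤ 1 := by
    rw [integral_toReal ((μ.measurable_rnDeriv volume).aemeasurable)
      (ae_restrict_of_ae (Measure.rnDeriv_lt_top μ volume))]
    have hA : (∫⁻ x in Icc (0:ℝ) 1, μ.rnDeriv volume x).toReal ≤ (μ (Icc (0:ℝ) 1)).toReal :=
      ENNReal.toReal_mono (measure_ne_top μ _) (Measure.setLIntegral_rnDeriv_le _)
    have hB : (μ (Icc (0:ℝ) 1)).toReal ≤ 1 := by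
      have := ENNReal.toReal_mono ENNReal.one_ne_top hμ.2.1
      simpa using this
    linarith
  have h2 : Jfun μ ≤ ∫ x in Icc (0:ℝ) 1, (1 + (μ.rnDeriv volume x).toReal)/2 := by
    refine setIntegral_mono_on (sqrt_toReal_integrable μ)
      ((((integrable_const 1).add (Measure.integrable_toReal_rnDeriv).integrableOn).div_const 2))
      measurableSet_Icc (fun x _ => sqrt_le_half _ ENNReal.toReal_nonneg)
  have h3 : ∫ x in Icc (0:ℝ) 1, (1 + (μ.rnDeriv volume x).toReal)/2
      = (1 + ∫ x in Icc (0:ℝ) 1, (μ.rnDeriv volume x).toReal)/2 := by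
    rw [integral_div, integral_add (integrable_const 1)
      (Measure.integrable_toReal_rnDeriv).integrableOn]
    simp [Real.volume_Icc]
  linarith [h2, h3 ▸ h2]

lemma Jfun_le_Jsup {α : ℝ} {μ : Measure ℝ} (hμ : memB α μ) : Jfun μ ≤ Jsup α := by
  apply le_ciSup (f := fun p : {μ : Measure ℝ // memB α μ} => Jfun p.1)
    ⟨1, by rintro x ⟨p, rfl⟩; exact Jfun_le_one p.2⟩ (⟨μ, hμ⟩ : {μ : Measure ℝ // memB α μ})

lemma sqrt_int_aux {F : ℝ → ℝ≥0∞} (hF : Measurable F)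
    (h : IntegrableOn (fun x => (F x).toReal) (Icc (0:ℝ) 1) volume) :
    IntegrableOn (fun x => Real.sqrt ((F x).toReal)) (Icc (0:ℝ) 1) volume := by
  have hmeas : AEStronglyMeasurable (fun x => Real.sqrt ((F x).toReal))
      (volume.restrict (Icc (0:ℝ) 1)) :=
    (Real.continuous_sqrt.measurable.comp hF.ennreal_toReal).aestronglyMeasurable
  refine Integrable.mono' (g := fun x => (1 + (F x).toReal)/2)
    (((integrable_const 1).add h).div_const 2) hmeas ?_
  filter_upwards with x
  rw [Real.norm_eq_abs, abs_of_nonneg (Real.sqrt_nonneg _)]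
  exact sqrt_le_half _ ENNReal.toReal_nonneg

lemma sqrt_le_lin (t u : ℝ) (ht : 0 ≤ t) (hu : 0 < u) :
    Real.sqrt t ≤ t/(2*u) + u/2 := by
  rw [div_add_div _ _ (by positivity) (by norm_num), le_div_iff₀ (by positivity)]
  nlinarith [Real.sq_sqrt ht, Real.sqrt_nonneg t, sq_nonneg (Real.sqrt t - u)]

lemma ind_int (c : ℝ) (hc0 : 0 ≤ c) (hc1 : c ≤ 1) :
    ∫ x in Icc (0:ℝ) 1, (Ici c).indicator (fun _ => (1:ℝ)) x = 1 - c := by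
  have h : Icc (0:ℝ) 1 ∩ Ici c = Icc c 1 := by
    ext x
    simp only [Set.mem_inter_iff, mem_Icc, mem_Ici]
    constructor
    · rintro ⟨⟨_, h2⟩, h3⟩; exact ⟨h3, h2⟩
    · rintro ⟨h1, h2⟩; exact ⟨⟨hc0.trans h1, h2⟩, h1⟩
  rw [setIntegral_indicator measurableSet_Ici, setIntegral_const, h, Real.volume_real_Icc_of_le hc1,
    smul_eq_mul, mul_one]

lemma constraint_arith (X V t k bb dd A : ℝ) (h1 : 0 ≤ 1 - t) (ht0 : 0 ≤ t)
    (hC : 1/2 + A ≤ X) (hb : 0 ≤ bb*dd) (htk : t*k = bb*dd) (hk : k = (1/2 - A)/2)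
    (hint : (1-t)*(X - 1*bb) + (1-t)*bb*(1-dd) + t*(1-k) ≤ V) : 1/2 + A ≤ V := by
  nlinarith [mul_le_mul_of_nonneg_left hC h1, mul_nonneg ht0 hb]


set_option maxHeartbeats 2000000 in
lemma main_full {α : ℝ} (hα : α ∈ Set.Ioo (0 : ℝ) (1 / 2)) {μ : Measure ℝ}
    (hμ : memB α μ) (hopt : Jfun μ = Jsup α) :
    volume.withDensity (μ.rnDeriv volume) Set.univ = 1 := by
  haveI : IsFiniteMeasure μ := aux_fin hμ
  obtain ⟨hα0, hα2⟩ := hα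
  set f := μ.rnDeriv volume with hfdef
  set a := volume.withDensity f with hadef
  have hfmeas : Measurable f := μ.measurable_rnDeriv volume
  have haμ : ∀ s, a s ≤ μ s := fun s => Measure.le_iff'.1 (μ.withDensity_rnDeriv_le volume) s
  have haIc : a (Icc (0:ℝ) 1)ᶜ = 0 := le_antisymm (le_trans (haμ _) hμ.1.le) zero_le
  have haU : a Set.univ = a (Icc (0:ℝ) 1) := aux_univ haIc
  have haU1 : a Set.univ ≤ 1 := by rw [haU]; exact le_trans (haμ _) hμ.2.1
  by_contra hne
  have hlt : a Set.univ < 1 := lt_of_le_of_ne haU1 hne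
  -- basic constants
  set β' : ℝ≥0∞ := 1 - a Set.univ with hβ'def
  have hβ'pos : 0 < β' := tsub_pos_of_lt hlt
  have hβ'top : β' ≠ ∞ := (lt_of_le_of_lt tsub_le_self ENNReal.one_lt_top).ne
  set β : ℝ := β'.toReal with hβdef
  have hβpos : 0 < β := ENNReal.toReal_pos hβ'pos.ne' hβ'top
  have hβ1 : β ≤ 1 := by
    have h := ENNReal.toReal_mono ENNReal.one_ne_top (tsub_le_self (a := (1:ℝ≥0∞)) (b := a Set.univ))
    simpa using h
  set κ : ℝ := (1/2 - α)/2 with hκdef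
  have hκpos : 0 < κ := by rw [hκdef]; linarith
  have hκ1 : κ ≤ 1 := by rw [hκdef]; linarith
  -- choice of δ
  have hsing : ∃ n : ℕ, a (Icc (0:ℝ) (1/(n+1))) < β'/4 := by
    have hmono : Antitone (fun n : ℕ => Icc (0:ℝ) (1/(n+1 : ℝ))) := by
      intro m n hmn
      apply Icc_subset_Icc_right
      have h1 : (0:ℝ) < m + 1 := by positivity
      have h2 : (m:ℝ) + 1 ≤ n + 1 := by exact_mod_cast Nat.add_le_add_right hmn 1
      exact one_div_le_one_div_of_le h1 h2
    have hint : (⋂ n : ℕ, Icc (0:ℝ) (1/(n+1 : ℝ))) = {0} := by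
      ext x
      simp only [mem_iInter, mem_Icc, mem_singleton_iff]
      constructor
      · intro h
        have h0 : 0 ≤ x := (h 0).1
        by_contra hx
        obtain ⟨n, hn⟩ := exists_nat_one_div_lt (lt_of_le_of_ne h0 (Ne.symm hx))
        exact absurd ((h n).2) (not_le.2 hn)
      · rintro rfl
        exact fun n => ⟨le_refl 0, by positivity⟩
    have htend := tendsto_measure_iInter_atTop (μ := a)
      (fun n => (measurableSet_Icc).nullMeasurableSet) hmono ⟨0, measure_ne_top a _⟩
    rw [hint] at htend
    have h0 : a ({0} : Set ℝ) = 0 :=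
      withDensity_absolutelyContinuous volume f (measure_singleton 0)
    rw [h0] at htend
    have hq : (0:ℝ≥0∞) < β'/4 := ENNReal.div_pos hβ'pos.ne' (by norm_num)
    exact (htend.eventually_lt_const hq).exists
  obtain ⟨n, hn⟩ := hsing
  set δ : ℝ := min (1/(n+1 : ℝ)) (min 1 (κ^2/(256*β))) with hδdef
  have hδpos : 0 < δ := lt_min (by positivity) (lt_min one_pos (by positivity))
  have hδ1 : δ ≤ 1 := le_trans (min_le_right _ _) (min_le_left _ _)
  have hδκ : β*δ ≤ κ^2/256 := by
    have h : δ ≤ κ^2/(256*β) := le_trans (min_le_right _ _) (min_le_right _ _)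
    calc β*δ ≤ β*(κ^2/(256*β)) := mul_le_mul_of_nonneg_left h hβpos.le
    _ = κ^2/256 := by field_simp
  have hAδ : a (Icc (0:ℝ) δ) ≤ β'/4 :=
    le_of_lt (lt_of_le_of_lt (measure_mono (Icc_subset_Icc_right (min_le_left _ _))) hn)
  set θ : ℝ := β*δ/κ with hθdef
  have hθpos : 0 < θ := by positivity
  have hθκ : θ*κ = β*δ := by rw [hθdef]; field_simp
  set sq : ℝ := Real.sqrt (β*δ) with hsqdef
  have hsqpos : 0 < sq := Real.sqrt_pos.2 (by positivity)
  have hsq2 : sq^2 = β*δ := Real.sq_sqrt (by positivity)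
  have hsqκ : sq ≤ κ/16 := by
    have h : β*δ ≤ (κ/16)^2 := by nlinarith
    calc sq = Real.sqrt (β*δ) := hsqdef
    _ ≤ Real.sqrt ((κ/16)^2) := Real.sqrt_le_sqrt h
    _ = κ/16 := Real.sqrt_sq (by positivity)
  have h2θ : 2*θ ≤ sq/8 := by
    nlinarith [hθκ, hsq2, mul_le_mul_of_nonneg_left hsqκ hsqpos.le, hκpos]
  have hsq1 : sq ≤ 1 := by linarith [hsqκ, hκ1]
  have hθ1 : θ ≤ 1/2 := by linarith [h2θ, hsq1]
  have h1θ : 0 ≤ 1 - θ := by linarith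
  -- the competitor measure
  set c₁ : ℝ≥0∞ := ENNReal.ofReal (1-θ) with hc₁def
  set d : ℝ≥0∞ := ENNReal.ofReal (β/δ) with hddef
  set e : ℝ≥0∞ := ENNReal.ofReal (θ/κ) with hedef
  have hc₁top : c₁ ≠ ∞ := ENNReal.ofReal_ne_top
  have he1 : d * ENNReal.ofReal δ = β' := by
    rw [hddef, ← ENNReal.ofReal_mul (by positivity : (0:ℝ) ≤ β/δ),
      div_mul_cancel₀ _ hδpos.ne', hβdef, ENNReal.ofReal_toReal hβ'top]
  have he2 : e * ENNReal.ofReal κ = ENNReal.ofReal θ := by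
    rw [hedef, ← ENNReal.ofReal_mul (by positivity : (0:ℝ) ≤ θ/κ), div_mul_cancel₀ _ hκpos.ne']
  set G : ℝ → ℝ≥0∞ := fun x => c₁ * f x + (Icc (0:ℝ) δ).indicator (fun _ => c₁*d) x
      + (Icc (0:ℝ) κ).indicator (fun _ => e) x with hGdef
  have hGmeas : Measurable G :=
    ((hfmeas.const_mul c₁).add (measurable_const.indicator measurableSet_Icc)).add
      (measurable_const.indicator measurableSet_Icc)
  set ν : Measure ℝ := volume.withDensity G with hνdef
  have hνE : ∀ E : Set ℝ, MeasurableSet E →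
      ν E = c₁ * a E + c₁ * d * volume (Icc (0:ℝ) δ ∩ E) + e * volume (Icc (0:ℝ) κ ∩ E) := by
    intro E hE
    rw [hνdef, withDensity_apply _ hE,
      lintegral_add_right _ (measurable_const.indicator measurableSet_Icc),
      lintegral_add_right _ (measurable_const.indicator measurableSet_Icc),
      lintegral_const_mul c₁ hfmeas, ← withDensity_apply f hE,
      lintegral_indicator measurableSet_Icc, lintegral_indicator measurableSet_Icc,
      setLIntegral_const, setLIntegral_const,
      Measure.restrict_apply measurableSet_Icc, Measure.restrict_apply measurableSet_Icc]
  have hsub1 : Icc (0:ℝ) δ ⊆ Icc (0:ℝ) 1 := Icc_subset_Icc_right hδ1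
  have hsub2 : Icc (0:ℝ) κ ⊆ Icc (0:ℝ) 1 := Icc_subset_Icc_right hκ1
  have hνIc : ν (Icc (0:ℝ) 1)ᶜ = 0 := by
    rw [hνE _ measurableSet_Icc.compl]
    have h1 : Icc (0:ℝ) δ ∩ (Icc (0:ℝ) 1)ᶜ = ∅ := by
      rw [eq_empty_iff_forall_notMem]; rintro x ⟨hx1, hx2⟩; exact hx2 (hsub1 hx1)
    have h2 : Icc (0:ℝ) κ ∩ (Icc (0:ℝ) 1)ᶜ = ∅ := by
      rw [eq_empty_iff_forall_notMem]; rintro x ⟨hx1, hx2⟩; exact hx2 (hsub2 hx1)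
    rw [h1, h2, haIc]
    simp
  have hνI : ν (Icc (0:ℝ) 1) = 1 := by
    rw [hνE _ measurableSet_Icc, inter_eq_left.mpr hsub1, inter_eq_left.mpr hsub2,
      Real.volume_Icc, Real.volume_Icc, sub_zero, sub_zero, mul_assoc, he1, he2, ← haU]
    rw [← mul_add c₁, add_tsub_cancel_of_le haU1, mul_one, hc₁def,
      ← ENNReal.ofReal_add h1θ hθpos.le, sub_add_cancel, ENNReal.ofReal_one]
  have hνfin : ∀ E : Set ℝ, ν E ≠ ∞ := by
    intro E
    have h : ν E ≤ 1 := by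
      calc ν E ≤ ν Set.univ := measure_mono (subset_univ E)
      _ = ν (Icc (0:ℝ) 1) := aux_univ hνIc
      _ = 1 := hνI
    exact (lt_of_le_of_lt h ENNReal.one_lt_top).ne
  haveI hνfinM : IsFiniteMeasure ν := ⟨lt_of_le_of_lt (le_of_eq (aux_univ hνIc)) (hνI ▸ ENNReal.one_lt_top)⟩
  -- constraint
  have hμEβ : ∀ E : Set ℝ, (μ E).toReal - β ≤ (a E).toReal := by
    intro E
    have hsingle : μ.singularPart volume Set.univ ≤ β' := by
      have h1 : μ.singularPart volume Set.univ + a Set.univ ≤ 1 := by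
        rw [← Measure.add_apply, μ.singularPart_add_rnDeriv volume, aux_univ hμ.1]
        exact hμ.2.1
      exact ENNReal.le_sub_of_add_le_right (lt_of_le_of_lt haU1 ENNReal.one_lt_top).ne h1
    have hdec : μ E ≤ a E + β' := by
      conv_lhs => rw [← μ.singularPart_add_rnDeriv volume]
      rw [Measure.add_apply, add_comm]
      exact add_le_add_right (le_trans (measure_mono (subset_univ E)) hsingle) _
    have h2 := ENNReal.toReal_mono (ENNReal.add_ne_top.2 ⟨measure_ne_top a E, hβ'top⟩) hdec
    rw [ENNReal.toReal_add (measure_ne_top a E) hβ'top] at h2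
    linarith
  have hptwise : ∀ x ∈ Icc (0:ℝ) 1,
      (1-θ)*((μ (Icc 0 x)).toReal - β) + ((1-θ)*β) * (Ici δ).indicator (fun _ => (1:ℝ)) x
        + θ * (Ici κ).indicator (fun _ => (1:ℝ)) x ≤ (ν (Icc 0 x)).toReal := by
    intro x _
    rw [← ENNReal.ofReal_le_iff_le_toReal (hνfin _), hνE _ measurableSet_Icc]
    have key1 : ENNReal.ofReal ((1-θ)*((μ (Icc 0 x)).toReal - β)) ≤ c₁ * a (Icc 0 x) := by
      rw [ENNReal.ofReal_mul h1θ]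
      exact mul_le_mul_right (le_trans (ENNReal.ofReal_le_ofReal (hμEβ _))
        (le_of_eq (ENNReal.ofReal_toReal (measure_ne_top a _)))) c₁
    have key2 : ENNReal.ofReal (((1-θ)*β) * (Ici δ).indicator (fun _ => (1:ℝ)) x)
        ≤ c₁ * d * volume (Icc (0:ℝ) δ ∩ Icc 0 x) := by
      by_cases hxδ : δ ≤ x
      · rw [indicator_of_mem (mem_Ici.mpr hxδ), mul_one,
          inter_eq_left.mpr (Icc_subset_Icc_right hxδ), Real.volume_Icc, sub_zero,
          mul_assoc, he1, ENNReal.ofReal_mul h1θ, hβdef, ENNReal.ofReal_toReal hβ'top]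
      · rw [indicator_of_notMem (by simpa using hxδ)]
        simp
    have key3 : ENNReal.ofReal (θ * (Ici κ).indicator (fun _ => (1:ℝ)) x)
        ≤ e * volume (Icc (0:ℝ) κ ∩ Icc 0 x) := by
      by_cases hxκ : κ ≤ x
      · rw [indicator_of_mem (mem_Ici.mpr hxκ), mul_one,
          inter_eq_left.mpr (Icc_subset_Icc_right hxκ), Real.volume_Icc, sub_zero, he2]
      · rw [indicator_of_notMem (by simpa using hxκ)]
        simp
    refine le_trans ENNReal.ofReal_add_le ?_
    refine le_trans (add_le_add_left ENNReal.ofReal_add_le _) ?_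
    exact add_le_add (add_le_add key1 key2) key3
  have hAint : IntegrableOn (fun x => (1-θ)*((μ (Icc 0 x)).toReal - β)) (Icc (0:ℝ) 1) volume := by
    have h : IntegrableOn (fun x => (μ (Icc 0 x)).toReal - β) (Icc (0:ℝ) 1) volume :=
      (integrable_cdf μ).sub (integrable_const β)
    exact h.const_mul _
  have hBint : IntegrableOn (fun x => ((1-θ)*β) * (Ici δ).indicator (fun _ => (1:ℝ)) x)
      (Icc (0:ℝ) 1) volume := by
    have h : IntegrableOn (fun x => (Ici δ).indicator (fun _ => (1:ℝ)) x) (Icc (0:ℝ) 1) volume :=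
      (integrable_const (1:ℝ)).indicator measurableSet_Ici
    exact h.const_mul _
  have hCint : IntegrableOn (fun x => θ * (Ici κ).indicator (fun _ => (1:ℝ)) x)
      (Icc (0:ℝ) 1) volume := by
    have h : IntegrableOn (fun x => (Ici κ).indicator (fun _ => (1:ℝ)) x) (Icc (0:ℝ) 1) volume :=
      (integrable_const (1:ℝ)).indicator measurableSet_Ici
    exact h.const_mul _
  have hABint : IntegrableOn (fun x => (1-θ)*((μ (Icc 0 x)).toReal - β)
      + ((1-θ)*β) * (Ici δ).indicator (fun _ => (1:ℝ)) x) (Icc (0:ℝ) 1) volume := hAint.add hBint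
  have hLBint : IntegrableOn (fun x => (1-θ)*((μ (Icc 0 x)).toReal - β)
      + ((1-θ)*β) * (Ici δ).indicator (fun _ => (1:ℝ)) x
      + θ * (Ici κ).indicator (fun _ => (1:ℝ)) x) (Icc (0:ℝ) 1) volume := hABint.add hCint
  have hmem3 : (1/2 + α) ≤ ∫ x in Icc (0:ℝ) 1, (ν (Icc 0 x)).toReal := by
    have hint := setIntegral_mono_on hLBint (integrable_cdf ν) measurableSet_Icc hptwise
    rw [integral_add hABint hCint, integral_add hAint hBint,
      integral_const_mul, integral_const_mul, integral_const_mul,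
      integral_sub (integrable_cdf μ) (integrable_const β),
      ind_int δ hδpos.le hδ1, ind_int κ hκpos.le hκ1, setIntegral_const,
      Real.volume_real_Icc_of_le zero_le_one] at hint
    simp only [sub_zero, ENNReal.toReal_ofReal (zero_le_one (α := ℝ)), one_smul, smul_eq_mul] at hint
    have hC : 1/2 + α ≤ ∫ x in Icc (0:ℝ) 1, (μ (Icc 0 x)).toReal := hμ.2.2
    have hβδ : 0 ≤ β*δ := by positivity
    exact constraint_arith _ _ θ κ β δ α h1θ hθpos.le hC hβδ hθκ hκdef hint
  have hmem : memB α ν := ⟨hνIc, hνI.le, hmem3⟩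
  -- the J part
  have hdtop : d ≠ ∞ := ENNReal.ofReal_ne_top
  have hetop : e ≠ ∞ := ENNReal.ofReal_ne_top
  have hGae : ν.rnDeriv volume =ᵐ[volume] G := Measure.rnDeriv_withDensity volume hGmeas
  have hJν : Jfun ν = ∫ x in Icc (0:ℝ) 1, Real.sqrt ((G x).toReal) :=
    setIntegral_congr_ae measurableSet_Icc (by filter_upwards [hGae] with x hx _; rw [hx])
  have hffin : ∀ᵐ x ∂(volume : Measure ℝ), f x ≠ ∞ :=
    (Measure.rnDeriv_lt_top μ volume).mono (fun x h => h.ne)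
  have hGfin : ∀ᵐ x ∂(volume : Measure ℝ), G x ≠ ∞ := by
    filter_upwards [hffin] with x hx
    simp only [hGdef]
    refine ENNReal.add_ne_top.2 ⟨ENNReal.add_ne_top.2 ⟨ENNReal.mul_ne_top hc₁top hx, ?_⟩, ?_⟩
    · by_cases h : x ∈ Icc (0:ℝ) δ
      · rw [indicator_of_mem h]; exact ENNReal.mul_ne_top hc₁top hdtop
      · rw [indicator_of_notMem h]; exact ENNReal.zero_ne_top
    · by_cases h : x ∈ Icc (0:ℝ) κ
      · rw [indicator_of_mem h]; exact hetop
      · rw [indicator_of_notMem h]; exact ENNReal.zero_ne_top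
  have hGint : IntegrableOn (fun x => (G x).toReal) (Icc (0:ℝ) 1) volume := by
    refine integrable_toReal_of_lintegral_ne_top hGmeas.aemeasurable ?_
    have h : ∫⁻ x in Icc (0:ℝ) 1, G x = ν (Icc (0:ℝ) 1) :=
      (withDensity_apply G measurableSet_Icc).symm
    rw [h, hνI]
    exact ENNReal.one_ne_top
  have hsqrtG_int : IntegrableOn (fun x => Real.sqrt ((G x).toReal)) (Icc (0:ℝ) 1) volume :=
    sqrt_int_aux hGmeas hGint
  have hfint : IntegrableOn (fun x => (f x).toReal) (Icc (0:ℝ) 1) volume :=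
    (Measure.integrable_toReal_rnDeriv).integrableOn
  have hsqrtf_int : IntegrableOn (fun x => Real.sqrt ((f x).toReal)) (Icc (0:ℝ) 1) volume :=
    sqrt_int_aux hfmeas hfint
  have hdisj : Disjoint (Icc (0:ℝ) δ) (Ioc δ 1) := by
    rw [Set.disjoint_left]
    rintro x hx1 hx2
    exact absurd hx1.2 (not_le.2 hx2.1)
  have hIeq : Icc (0:ℝ) 1 = Icc 0 δ ∪ Ioc δ 1 := (Icc_union_Ioc_eq_Icc hδpos.le hδ1).symm
  have hsub2' : Ioc δ 1 ⊆ Icc (0:ℝ) 1 := fun x hx => ⟨le_trans hδpos.le hx.1.le, hx.2⟩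
  have hsplitν : ∫ x in Icc (0:ℝ) 1, Real.sqrt ((G x).toReal)
      = (∫ x in Icc (0:ℝ) δ, Real.sqrt ((G x).toReal))
        + ∫ x in Ioc δ 1, Real.sqrt ((G x).toReal) := by
    rw [hIeq]
    exact setIntegral_union hdisj measurableSet_Ioc (hsqrtG_int.mono_set hsub1)
      (hsqrtG_int.mono_set hsub2')
  have hsplitμ : Jfun μ = (∫ x in Icc (0:ℝ) δ, Real.sqrt ((f x).toReal))
      + ∫ x in Ioc δ 1, Real.sqrt ((f x).toReal) := by
    have h0 : Jfun μ = ∫ x in Icc (0:ℝ) 1, Real.sqrt ((f x).toReal) := rfl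
    rw [h0, hIeq]
    exact setIntegral_union hdisj measurableSet_Ioc (hsqrtf_int.mono_set hsub1)
      (hsqrtf_int.mono_set hsub2')
  have hlow1 : Real.sqrt (1-θ) * sq ≤ ∫ x in Icc (0:ℝ) δ, Real.sqrt ((G x).toReal) := by
    have hconst : ∀ᵐ x ∂(volume.restrict (Icc (0:ℝ) δ)),
        Real.sqrt ((1-θ)*(β/δ)) ≤ Real.sqrt ((G x).toReal) := by
      filter_upwards [ae_restrict_of_ae hGfin, ae_restrict_mem measurableSet_Icc] with x hfin hmem
      apply Real.sqrt_le_sqrt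
      have hle : c₁ * d ≤ G x := by
        simp only [hGdef]
        calc c₁ * d = (Icc (0:ℝ) δ).indicator (fun _ => c₁*d) x :=
              (indicator_of_mem hmem (fun _ => c₁*d)).symm
          _ ≤ _ := le_add_of_le_of_nonneg (le_add_of_nonneg_left zero_le) zero_le
      have h2 := ENNReal.toReal_mono hfin hle
      rwa [ENNReal.toReal_mul, hc₁def, hddef, ENNReal.toReal_ofReal h1θ,
        ENNReal.toReal_ofReal (by positivity : (0:ℝ) ≤ β/δ)] at h2
    have hmono := integral_mono_ae (integrable_const _) (hsqrtG_int.mono_set hsub1) hconst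
    rw [setIntegral_const, Real.volume_real_Icc_of_le hδpos.le, sub_zero,
      smul_eq_mul] at hmono
    have hbd2 : β*δ = (β/δ)*δ^2 := by field_simp
    have hid : δ * Real.sqrt ((1-θ)*(β/δ)) = Real.sqrt (1-θ) * sq := by
      rw [Real.sqrt_mul h1θ, hsqdef, hbd2,
        Real.sqrt_mul (by positivity : (0:ℝ) ≤ β/δ), Real.sqrt_sq hδpos.le]
      ring
    rw [← hid]
    exact hmono
  have hlow2 : Real.sqrt (1-θ) * (∫ x in Ioc δ 1, Real.sqrt ((f x).toReal))
      ≤ ∫ x in Ioc δ 1, Real.sqrt ((G x).toReal) := by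
    rw [← integral_const_mul]
    refine integral_mono_ae ((hsqrtf_int.mono_set hsub2').const_mul _)
      (hsqrtG_int.mono_set hsub2') ?_
    filter_upwards [ae_restrict_of_ae hGfin, ae_restrict_of_ae hffin] with x hfinG hfinf
    have hle : c₁ * f x ≤ G x := by
      simp only [hGdef]
      exact le_trans (self_le_add_right _ _) (self_le_add_right _ _)
    have h2 := ENNReal.toReal_mono hfinG hle
    rw [ENNReal.toReal_mul, hc₁def, ENNReal.toReal_ofReal h1θ] at h2
    calc Real.sqrt (1-θ) * Real.sqrt ((f x).toReal)
        = Real.sqrt ((1-θ)*(f x).toReal) := (Real.sqrt_mul h1θ _).symm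
      _ ≤ Real.sqrt ((G x).toReal) := Real.sqrt_le_sqrt h2
  set u : ℝ := Real.sqrt (β/δ) with hudef
  have hupos : 0 < u := Real.sqrt_pos.2 (by positivity)
  have hbd2' : β*δ = (β/δ)*δ^2 := by field_simp
  have huδ : u * δ = sq := by
    rw [hudef, hsqdef, hbd2',
      Real.sqrt_mul (by positivity : (0:ℝ) ≤ β/δ), Real.sqrt_sq hδpos.le]
  have hbb : β/δ*(β*δ) = β^2 := by field_simp
  have hus : u * sq = β := by
    rw [hudef, hsqdef, ← Real.sqrt_mul (by positivity : (0:ℝ) ≤ β/δ), hbb,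
      Real.sqrt_sq hβpos.le]
  have hfintδ : IntegrableOn (fun x => (f x).toReal) (Icc (0:ℝ) δ) volume :=
    hfint.mono_set hsub1
  have hA : ∫ x in Icc (0:ℝ) δ, (f x).toReal ≤ β/4 := by
    rw [integral_toReal (hfmeas.aemeasurable)
      (ae_restrict_of_ae (Measure.rnDeriv_lt_top μ volume))]
    have h1 : (∫⁻ x in Icc (0:ℝ) δ, f x) = a (Icc (0:ℝ) δ) :=
      (withDensity_apply f measurableSet_Icc).symm
    have h2 := ENNReal.toReal_mono ((ENNReal.div_lt_top hβ'top (by norm_num)).ne) hAδ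
    rw [ENNReal.toReal_div] at h2
    rw [h1]
    simpa using h2
  have hE : ∫ x in Icc (0:ℝ) δ, Real.sqrt ((f x).toReal) ≤ (5/8) * sq := by
    have hptw : ∀ᵐ x ∂(volume.restrict (Icc (0:ℝ) δ)),
        Real.sqrt ((f x).toReal) ≤ (f x).toReal/(2*u) + u/2 :=
      Filter.Eventually.of_forall (fun x => sqrt_le_lin _ u ENNReal.toReal_nonneg hupos)
    have hrint : IntegrableOn (fun x => (f x).toReal/(2*u) + u/2) (Icc (0:ℝ) δ) volume := by
      have h1 : IntegrableOn (fun x => (f x).toReal/(2*u)) (Icc (0:ℝ) δ) volume :=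
        hfintδ.div_const _
      exact h1.add (integrable_const _)
    have hm := integral_mono_ae (hsqrtf_int.mono_set hsub1) hrint hptw
    rw [integral_add (hfintδ.div_const _) (integrable_const _), integral_div,
      setIntegral_const, Real.volume_real_Icc_of_le hδpos.le, sub_zero,
      smul_eq_mul] at hm
    have h3 : (∫ x in Icc (0:ℝ) δ, (f x).toReal)/(2*u) ≤ (β/4)/(2*u) := by
      gcongr
    have h4 : (β/4)/(2*u) = sq/8 := by
      rw [← hus]
      field_simp
      ring
    have h5 : δ*(u/2) = sq/2 := by rw [← huδ]; ring
    linarith [hm, h3]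
  have hEnn : 0 ≤ ∫ x in Icc (0:ℝ) δ, Real.sqrt ((f x).toReal) :=
    setIntegral_nonneg measurableSet_Icc (fun x _ => Real.sqrt_nonneg _)
  have hRnn : 0 ≤ ∫ x in Ioc δ 1, Real.sqrt ((f x).toReal) :=
    setIntegral_nonneg measurableSet_Ioc (fun x _ => Real.sqrt_nonneg _)
  have hsq1θ : 1 - θ ≤ Real.sqrt (1-θ) := by
    nlinarith [Real.sq_sqrt h1θ, Real.sqrt_nonneg (1-θ),
      Real.sqrt_le_one.mpr (show (1:ℝ)-θ ≤ 1 by linarith)]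
  have hJμ1 : Jfun μ ≤ 1 := Jfun_le_one hμ
  have hR1 : (∫ x in Ioc δ 1, Real.sqrt ((f x).toReal)) ≤ 1 := by
    rw [hsplitμ] at hJμ1
    linarith
  have hgain : Jfun μ < Jfun ν := by
    rw [hJν, hsplitν, hsplitμ]
    have hprod : (1-θ) * ((∫ x in Ioc δ 1, Real.sqrt ((f x).toReal)) + sq)
        ≤ Real.sqrt (1-θ) * ((∫ x in Ioc δ 1, Real.sqrt ((f x).toReal)) + sq) :=
      mul_le_mul_of_nonneg_right hsq1θ (by linarith)
    have hθR := mul_le_mul_of_nonneg_left hR1 hθpos.le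
    have hθsq := mul_le_mul_of_nonneg_left hsq1 hθpos.le
    linarith [hlow1, hlow2, hE, h2θ, hsqpos, hprod, hθR, hθsq]
  have hle := Jfun_le_Jsup hmem
  rw [← hopt] at hle
  linarith

/-- A maximizer `μ ∈ B_α` of `J` is a probability measure absolutely continuous with
respect to Lebesgue measure. -/
theorem stmt9 (α : ℝ) (hα : α ∈ Set.Ioo (0 : ℝ) (1 / 2)) (μ : Measure ℝ)
    (hμ : memB α μ) (hopt : Jfun μ = Jsup α) :
    μ (Set.Icc (0:ℝ) 1) = 1 ∧ μ ≪ volume := by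
  haveI : IsFiniteMeasure μ := aux_fin hμ
  have hU : volume.withDensity (μ.rnDeriv volume) Set.univ = 1 := main_full hα hμ hopt
  have haμ : ∀ s, volume.withDensity (μ.rnDeriv volume) s ≤ μ s :=
    fun s => Measure.le_iff'.1 (μ.withDensity_rnDeriv_le volume) s
  have haIc : volume.withDensity (μ.rnDeriv volume) (Icc (0:ℝ) 1)ᶜ = 0 :=
    le_antisymm (le_trans (haμ _) hμ.1.le) zero_le
  have hI1 : μ (Set.Icc (0:ℝ) 1) = 1 := by
    refine le_antisymm hμ.2.1 ?_
    calc (1:ℝ≥0∞) = volume.withDensity (μ.rnDeriv volume) Set.univ := hU.symm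
      _ = volume.withDensity (μ.rnDeriv volume) (Icc (0:ℝ) 1) := aux_univ haIc
      _ ≤ μ (Set.Icc (0:ℝ) 1) := haμ _
  refine ⟨hI1, ?_⟩
  rw [← Measure.singularPart_eq_zero]
  have hsum : μ.singularPart volume Set.univ + volume.withDensity (μ.rnDeriv volume) Set.univ
      = μ Set.univ := by
    rw [← Measure.add_apply, μ.singularPart_add_rnDeriv volume]
  have hμU : μ Set.univ ≤ 1 := by rw [aux_univ hμ.1]; exact hμ.2.1
  have hzero : μ.singularPart volume Set.univ = 0 := by
    rw [hU] at hsum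
    have h2 : μ.singularPart volume Set.univ + 1 ≤ 0 + 1 := by
      rw [hsum, zero_add]; exact hμU
    simpa using (ENNReal.add_le_add_iff_right ENNReal.one_ne_top).1 h2
  exact Measure.measure_univ_eq_zero.1 hzero
end

section
/- Suppose μ₁ and μ₂ belong to B_α and satisfy J(μ₁) = J(μ₂) = J_α. Then μ₁ = μ₂. In other words, the maximizer of J over B_α is unique. -/
open MeasureTheory

open Set
open scoped NNReal ENNReal

namespace Stmt10Aux

lemma sqrt_le_half (y : ℝ) (h0 : 0 ≤ y) : Real.sqrt y ≤ (1 + y)/2 := by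
  nlinarith [Real.sq_sqrt h0, Real.sqrt_nonneg y, sq_nonneg (Real.sqrt y - 1)]

lemma memB_finite {μ : Measure ℝ} (h1 : μ (Icc (0:ℝ) 1)ᶜ = 0)
    (h2 : μ (Icc (0:ℝ) 1) ≤ 1) : IsFiniteMeasure μ := by
  constructor
  calc μ univ = μ ((Icc (0:ℝ) 1) ∪ (Icc (0:ℝ) 1)ᶜ) := by rw [union_compl_self]
    _ ≤ μ (Icc (0:ℝ) 1) + μ (Icc (0:ℝ) 1)ᶜ := measure_union_le _ _
    _ ≤ 1 + 0 := add_le_add h2 h1.le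
    _ < ⊤ := by simp

lemma Afun_integrableOn (μ : Measure ℝ) [IsFiniteMeasure μ] :
    IntegrableOn (fun x => (μ (Icc 0 x)).toReal) (Icc (0:ℝ) 1) volume := by
  have hmono : Monotone (fun x => (μ (Icc 0 x)).toReal) := by
    intro a b hab
    exact ENNReal.toReal_mono (measure_ne_top μ _) (measure_mono (Icc_subset_Icc_right hab))
  exact (hmono.monotoneOn _).integrableOn_isCompact isCompact_Icc

lemma sqrt_rnDeriv_integrableOn (μ : Measure ℝ) [IsFiniteMeasure μ] :
    IntegrableOn (fun x => Real.sqrt ((μ.rnDeriv volume x).toReal)) (Icc (0:ℝ) 1) volume := by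
  have hint : IntegrableOn (fun x => (1 + (μ.rnDeriv volume x).toReal)/2) (Icc (0:ℝ) 1) volume :=
    Integrable.div_const
      ((integrable_const 1).add (Measure.integrable_toReal_rnDeriv.integrableOn)) 2
  apply hint.mono'
  · exact ((Measure.measurable_rnDeriv μ volume).ennreal_toReal.sqrt).aestronglyMeasurable
  · refine Filter.Eventually.of_forall (fun x => ?_)
    rw [Real.norm_eq_abs, abs_of_nonneg (Real.sqrt_nonneg _)]
    exact sqrt_le_half _ ENNReal.toReal_nonneg

lemma setIntegral_rnDeriv_toReal_le (μ : Measure ℝ) [IsFiniteMeasure μ] (s : Set ℝ) :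
    ∫ x in s, (μ.rnDeriv volume x).toReal ≤ (μ s).toReal := by
  rw [integral_toReal ((Measure.measurable_rnDeriv μ volume).aemeasurable.restrict)
    (ae_restrict_of_ae (Measure.rnDeriv_lt_top μ volume))]
  exact ENNReal.toReal_mono (measure_ne_top μ s) (Measure.setLIntegral_rnDeriv_le s)

lemma Jfun_le_one (μ : Measure ℝ) [IsFiniteMeasure μ] (h2 : μ (Set.Icc (0:ℝ) 1) ≤ 1) :
    Jfun μ ≤ 1 := by
  have hint : IntegrableOn (fun x => (1 + (μ.rnDeriv volume x).toReal)/2) (Icc (0:ℝ) 1) volume :=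
    Integrable.div_const
      ((integrable_const 1).add (Measure.integrable_toReal_rnDeriv.integrableOn)) 2
  have h1 : Jfun μ ≤ ∫ x in Icc (0:ℝ) 1, (1 + (μ.rnDeriv volume x).toReal)/2 := by
    apply setIntegral_mono_on (sqrt_rnDeriv_integrableOn μ) hint measurableSet_Icc
    exact fun x _ => sqrt_le_half _ ENNReal.toReal_nonneg
  have h2' : ∫ x in Icc (0:ℝ) 1, (1 + (μ.rnDeriv volume x).toReal)/2
      = (1 + ∫ x in Icc (0:ℝ) 1, (μ.rnDeriv volume x).toReal)/2 := by
    rw [integral_div,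
      integral_add (integrable_const 1) Measure.integrable_toReal_rnDeriv.integrableOn]
    simp [Measure.restrict_apply, Real.volume_Icc]
  have h3 : (μ (Icc (0:ℝ) 1)).toReal ≤ 1 := by
    apply ENNReal.toReal_le_of_le_ofReal one_pos.le; simpa using h2
  have := setIntegral_rnDeriv_toReal_le μ (Icc 0 1)
  rw [h2'] at h1
  linarith

lemma le_Jsup {α : ℝ} {ν : Measure ℝ} (hν : memB α ν) : Jfun ν ≤ Jsup α := by
  have : BddAbove (Set.range (fun μ : {μ : Measure ℝ // memB α μ} => Jfun μ.1)) := by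
    refine ⟨1, ?_⟩
    rintro y ⟨⟨μ, hμ⟩, rfl⟩
    have := memB_finite hμ.1 hμ.2.1
    exact Jfun_le_one μ hμ.2.1
  exact le_ciSup this ⟨ν, hν⟩


lemma sqrt_avg_ge {u v : ℝ} (hu : 0 ≤ u) (hv : 0 ≤ v) :
    (Real.sqrt u + Real.sqrt v)/2 ≤ Real.sqrt ((u+v)/2) := by
  nlinarith [Real.sq_sqrt hu, Real.sq_sqrt hv, Real.sq_sqrt (by linarith : (0:ℝ) ≤ (u+v)/2),
    Real.sqrt_nonneg u, Real.sqrt_nonneg v, Real.sqrt_nonneg ((u+v)/2),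
    sq_nonneg (Real.sqrt u - Real.sqrt v),
    sq_nonneg (Real.sqrt u + Real.sqrt v - 2*Real.sqrt ((u+v)/2))]

lemma sqrt_avg_eq {u v : ℝ} (hu : 0 ≤ u) (hv : 0 ≤ v)
    (h : Real.sqrt ((u+v)/2) = (Real.sqrt u + Real.sqrt v)/2) : u = v := by
  have hw : (u+v)/2 = ((Real.sqrt u + Real.sqrt v)/2)^2 := by
    rw [← h, Real.sq_sqrt (by linarith : (0:ℝ) ≤ (u+v)/2)]
  have h2 : (Real.sqrt u - Real.sqrt v)^2 = 0 := by
    nlinarith [Real.sq_sqrt hu, Real.sq_sqrt hv]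
  have h3 : Real.sqrt u = Real.sqrt v := by
    have := pow_eq_zero_iff (n := 2) (by norm_num) |>.mp h2
    linarith
  rw [← Real.sq_sqrt hu, ← Real.sq_sqrt hv, h3]

lemma half_toReal {a b : ℝ≥0∞} (ha : a ≠ ⊤) (hb : b ≠ ⊤) :
    ((2:ℝ≥0)⁻¹ • a + (2:ℝ≥0)⁻¹ • b).toReal = (a.toReal + b.toReal)/2 := by
  rw [ENNReal.smul_def, ENNReal.smul_def, smul_eq_mul, smul_eq_mul,
    ENNReal.toReal_add (ENNReal.mul_ne_top ENNReal.coe_ne_top ha)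
      (ENNReal.mul_ne_top ENNReal.coe_ne_top hb),
    ENNReal.toReal_mul, ENNReal.toReal_mul]
  simp
  ring

lemma rnDeriv_zero_on_compl {μ : Measure ℝ} (h1 : μ (Icc (0:ℝ) 1)ᶜ = 0) :
    ∀ᵐ x ∂(volume.restrict (Icc (0:ℝ) 1)ᶜ), μ.rnDeriv volume x = 0 := by
  have h : ∫⁻ x in (Icc (0:ℝ) 1)ᶜ, μ.rnDeriv volume x ∂volume = 0 :=
    le_antisymm (h1 ▸ Measure.setLIntegral_rnDeriv_le _) zero_le
  exact (lintegral_eq_zero_iff (Measure.measurable_rnDeriv μ volume)).mp h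

lemma ac_parts_eq {α : ℝ} {μ₁ μ₂ : Measure ℝ}
    (hμ₁ : memB α μ₁) (hμ₂ : memB α μ₂)
    (hopt₁ : Jfun μ₁ = Jsup α) (hopt₂ : Jfun μ₂ = Jsup α) :
    μ₁.rnDeriv volume =ᵐ[volume] μ₂.rnDeriv volume := by
  haveI F1 : IsFiniteMeasure μ₁ := memB_finite hμ₁.1 hμ₁.2.1
  haveI F2 : IsFiniteMeasure μ₂ := memB_finite hμ₂.1 hμ₂.2.1
  set r : ℝ≥0 := 2⁻¹ with hr
  set μm : Measure ℝ := r • μ₁ + r • μ₂ with hμm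
  have happ : ∀ s : Set ℝ, μm s = r • μ₁ s + r • μ₂ s := by
    intro s; simp [hμm]
  have htp : ∀ x : ℝ, (μm (Icc 0 x)).toReal
      = ((μ₁ (Icc 0 x)).toReal + (μ₂ (Icc 0 x)).toReal)/2 := by
    intro x; rw [happ]; exact half_toReal (measure_ne_top _ _) (measure_ne_top _ _)
  have hmem : memB α μm := by
    refine ⟨?_, ?_, ?_⟩
    · rw [happ, hμ₁.1, hμ₂.1]; simp
    · rw [happ]
      calc r • μ₁ (Icc (0:ℝ) 1) + r • μ₂ (Icc (0:ℝ) 1)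
          ≤ r • (1:ℝ≥0∞) + r • (1:ℝ≥0∞) := by
            gcongr <;> [exact hμ₁.2.1; exact hμ₂.2.1]
        _ = 1 := by
            rw [ENNReal.smul_def, smul_eq_mul, mul_one, hr]
            rw [ENNReal.coe_inv (by norm_num), ENNReal.coe_ofNat]
            exact ENNReal.inv_two_add_inv_two
    · have : ∫ x in Icc (0:ℝ) 1, (μm (Icc 0 x)).toReal
          = ((∫ x in Icc (0:ℝ) 1, (μ₁ (Icc 0 x)).toReal)
            + ∫ x in Icc (0:ℝ) 1, (μ₂ (Icc 0 x)).toReal)/2 := by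
        simp only [htp]
        rw [integral_div, integral_add (Afun_integrableOn μ₁) (Afun_integrableOn μ₂)]
      rw [this]
      have h1 := hμ₁.2.2; have h2 := hμ₂.2.2
      linarith
  haveI Fm : IsFiniteMeasure μm := memB_finite hmem.1 hmem.2.1
  -- rnDeriv of the midpoint
  have hd : μm.rnDeriv volume =ᵐ[volume]
      fun x => r • μ₁.rnDeriv volume x + r • μ₂.rnDeriv volume x := by
    have h0 := Measure.rnDeriv_add (r • μ₁) (r • μ₂) volume
    have h1 := Measure.rnDeriv_smul_left μ₁ volume r
    have h2 := Measure.rnDeriv_smul_left μ₂ volume r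
    filter_upwards [h0, h1, h2] with x hx0 hx1 hx2
    rw [hμm, hx0]
    simp only [Pi.add_apply, hx1, hx2, Pi.smul_apply]
  -- pointwise concavity a.e.
  have h_ae_ge : ∀ᵐ x ∂volume,
      (Real.sqrt ((μ₁.rnDeriv volume x).toReal) + Real.sqrt ((μ₂.rnDeriv volume x).toReal))/2
        ≤ Real.sqrt ((μm.rnDeriv volume x).toReal) := by
    filter_upwards [hd, Measure.rnDeriv_lt_top μ₁ volume, Measure.rnDeriv_lt_top μ₂ volume]
      with x hx h1 h2
    rw [hx, half_toReal h1.ne h2.ne]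
    exact sqrt_avg_ge ENNReal.toReal_nonneg ENNReal.toReal_nonneg
  have hint1 := sqrt_rnDeriv_integrableOn μ₁
  have hint2 := sqrt_rnDeriv_integrableOn μ₂
  have hintm := sqrt_rnDeriv_integrableOn μm
  have hintavg : IntegrableOn (fun x =>
      (Real.sqrt ((μ₁.rnDeriv volume x).toReal)
        + Real.sqrt ((μ₂.rnDeriv volume x).toReal))/2) (Icc (0:ℝ) 1) volume :=
    (hint1.add hint2).div_const 2
  have hJm_ge : (Jfun μ₁ + Jfun μ₂)/2 ≤ Jfun μm := by
    have : ∫ x in Icc (0:ℝ) 1,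
        (Real.sqrt ((μ₁.rnDeriv volume x).toReal)
          + Real.sqrt ((μ₂.rnDeriv volume x).toReal))/2
        ≤ Jfun μm :=
      integral_mono_ae hintavg hintm (ae_restrict_of_ae h_ae_ge)
    calc (Jfun μ₁ + Jfun μ₂)/2
        = ∫ x in Icc (0:ℝ) 1, (Real.sqrt ((μ₁.rnDeriv volume x).toReal)
            + Real.sqrt ((μ₂.rnDeriv volume x).toReal))/2 := by
          rw [integral_div, integral_add hint1 hint2]; rfl
      _ ≤ Jfun μm := this
  have hJm_le : Jfun μm ≤ Jsup α := le_Jsup hmem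
  have hJm : Jfun μm = Jsup α := by rw [hopt₁, hopt₂] at hJm_ge; linarith
  -- equality in the integral forces pointwise equality a.e. on [0,1]
  have hzero : ∫ x in Icc (0:ℝ) 1,
      (Real.sqrt ((μm.rnDeriv volume x).toReal)
        - (Real.sqrt ((μ₁.rnDeriv volume x).toReal)
          + Real.sqrt ((μ₂.rnDeriv volume x).toReal))/2) = 0 := by
    rw [integral_sub hintm hintavg]
    have : ∫ x in Icc (0:ℝ) 1, (Real.sqrt ((μ₁.rnDeriv volume x).toReal)
        + Real.sqrt ((μ₂.rnDeriv volume x).toReal))/2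
        = (Jfun μ₁ + Jfun μ₂)/2 := by
      rw [integral_div, integral_add hint1 hint2]; rfl
    rw [this, hopt₁, hopt₂]
    show Jfun μm - _ = 0
    rw [hJm]; ring
  have h_ae_eq : ∀ᵐ x ∂(volume.restrict (Icc (0:ℝ) 1)),
      Real.sqrt ((μm.rnDeriv volume x).toReal)
        - (Real.sqrt ((μ₁.rnDeriv volume x).toReal)
          + Real.sqrt ((μ₂.rnDeriv volume x).toReal))/2 = 0 := by
    have hnn : 0 ≤ᵐ[volume.restrict (Icc (0:ℝ) 1)] fun x =>
        Real.sqrt ((μm.rnDeriv volume x).toReal)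
          - (Real.sqrt ((μ₁.rnDeriv volume x).toReal)
            + Real.sqrt ((μ₂.rnDeriv volume x).toReal))/2 := by
      filter_upwards [ae_restrict_of_ae h_ae_ge] with x hx
      simpa using sub_nonneg.mpr hx
    have := (integral_eq_zero_iff_of_nonneg_ae hnn (hintm.sub hintavg)).mp hzero
    filter_upwards [this] with x hx using hx
  have h_on : ∀ᵐ x ∂(volume.restrict (Icc (0:ℝ) 1)),
      μ₁.rnDeriv volume x = μ₂.rnDeriv volume x := by
    filter_upwards [h_ae_eq, ae_restrict_of_ae hd,
      ae_restrict_of_ae (Measure.rnDeriv_lt_top μ₁ volume),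
      ae_restrict_of_ae (Measure.rnDeriv_lt_top μ₂ volume)] with x hx hxd h1 h2
    rw [hxd, half_toReal h1.ne h2.ne] at hx
    have heq : Real.sqrt (((μ₁.rnDeriv volume x).toReal + (μ₂.rnDeriv volume x).toReal)/2)
        = (Real.sqrt ((μ₁.rnDeriv volume x).toReal)
          + Real.sqrt ((μ₂.rnDeriv volume x).toReal))/2 := by linarith
    have := sqrt_avg_eq ENNReal.toReal_nonneg ENNReal.toReal_nonneg heq
    exact (ENNReal.toReal_eq_toReal_iff' h1.ne h2.ne).mp this
  have h_off : ∀ᵐ x ∂(volume.restrict (Icc (0:ℝ) 1)ᶜ),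
      μ₁.rnDeriv volume x = μ₂.rnDeriv volume x := by
    filter_upwards [rnDeriv_zero_on_compl hμ₁.1, rnDeriv_zero_on_compl hμ₂.1] with x h1 h2
    rw [h1, h2]
  exact ae_of_ae_restrict_of_ae_restrict_compl _ h_on h_off

lemma sqrt_integrableOn {h : ℝ → ℝ} (hm : Measurable h) (h0 : ∀ x, 0 ≤ h x)
    (hint : IntegrableOn h (Icc (0:ℝ) 1) volume) :
    IntegrableOn (fun x => Real.sqrt (h x)) (Icc (0:ℝ) 1) volume := by
  have hint2 : IntegrableOn (fun x => (1 + h x)/2) (Icc (0:ℝ) 1) volume :=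
    Integrable.div_const ((integrable_const 1).add hint) 2
  apply hint2.mono'
  · exact (hm.sqrt).aestronglyMeasurable
  · refine Filter.Eventually.of_forall (fun x => ?_)
    rw [Real.norm_eq_abs, abs_of_nonneg (Real.sqrt_nonneg _)]
    exact sqrt_le_half _ (h0 x)

lemma dirac_perp : (Measure.dirac (0:ℝ)) ⟂ₘ (volume : Measure ℝ) := by
  refine ⟨{0}ᶜ, ?_, ?_⟩
  · simp
  · simp

/-- helper: `√(s/δ) * δ = √(s*δ)` for `0 ≤ s`, `0 < δ` -/
lemma sqrt_div_mul {s δ : ℝ} (hs : 0 ≤ s) (hδ : 0 < δ) :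
    Real.sqrt (s/δ) * δ = Real.sqrt (s*δ) := by
  rw [← Real.sqrt_sq hδ.le, ← Real.sqrt_mul (by positivity)]
  congr 1
  field_simp
  rw [Real.sq_sqrt (by positivity)]

/-- AM-GM: `√y ≤ y/(2a) + a/2` for `a > 0`, `y ≥ 0`. -/
lemma sqrt_le_am {y a : ℝ} (hy : 0 ≤ y) (ha : 0 < a) :
    Real.sqrt y ≤ y/(2*a) + a/2 := by
  have key : 2*a*Real.sqrt y ≤ y + a^2 := by
    nlinarith [sq_nonneg (Real.sqrt y - a), Real.sq_sqrt hy]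
  calc Real.sqrt y = (2*a*Real.sqrt y)/(2*a) := by field_simp
    _ ≤ (y + a^2)/(2*a) := by
        apply div_le_div_of_nonneg_right key (by positivity) |>.trans_eq rfl
    _ = y/(2*a) + a/2 := by field_simp

set_option maxHeartbeats 1000000 in
lemma singularPart_zero_of_opt {α : ℝ} {μ : Measure ℝ} (hα : α ∈ Set.Ioo (0:ℝ) (1/2))
    (hμ : memB α μ) (hopt : Jfun μ = Jsup α) : μ.singularPart volume = 0 := by
  by_contra hξ
  haveI F : IsFiniteMeasure μ := memB_finite hμ.1 hμ.2.1
  set I : Set ℝ := Icc (0:ℝ) 1 with hI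
  set ξ : Measure ℝ := μ.singularPart volume with hξdef
  set f : ℝ → ℝ≥0∞ := μ.rnDeriv volume with hf
  set μa : Measure ℝ := volume.withDensity f with hμa
  have hdecomp : μ = ξ + μa := (μ.haveLebesgueDecomposition_add volume)
  have happμ : ∀ S : Set ℝ, μ S = ξ S + μa S := by
    intro S; conv_lhs => rw [hdecomp]
    rfl
  haveI Fξ : IsFiniteMeasure ξ := isFiniteMeasure_of_le μ (Measure.singularPart_le μ volume)
  haveI Fa : IsFiniteMeasure μa := Measure.withDensity.instIsFiniteMeasure
  have hξIc : ξ Iᶜ = 0 := by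
    have := Measure.singularPart_le μ volume Iᶜ
    rw [hμ.1] at this
    exact le_antisymm this zero_le
  have hμaIc : μa Iᶜ = 0 := by
    have h := happμ Iᶜ
    rw [hμ.1] at h
    exact (add_eq_zero.mp h.symm).2
  set s : ℝ := (ξ I).toReal with hs
  have hs_pos : 0 < s := by
    apply ENNReal.toReal_pos ?_ (measure_ne_top _ _)
    intro h0
    apply hξ
    apply Measure.measure_univ_eq_zero.mp
    have : ξ univ ≤ ξ I + ξ Iᶜ := by
      calc ξ univ = ξ (I ∪ Iᶜ) := by rw [union_compl_self]
        _ ≤ ξ I + ξ Iᶜ := measure_union_le _ _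
    rw [h0, hξIc] at this
    simpa using this
  have hs_le : s ≤ 1 := by
    apply ENNReal.toReal_le_of_le_ofReal one_pos.le
    simpa using ((Measure.singularPart_le μ volume) I).trans hμ.2.1
  set c : ℝ := 1/2 - α with hc
  have hc_pos : 0 < c := by simp only [hc]; linarith [hα.2]
  -- choice of δ
  obtain ⟨δ, hδ0, hδ1, hFδ, hsδ⟩ :
      ∃ δ : ℝ, 0 < δ ∧ δ ≤ 1 ∧ (μa (Icc 0 δ)).toReal ≤ s/4 ∧ s*δ < c^2/16 := by
    have hset : (⋂ n : ℕ, Icc (0:ℝ) (1/(n+1))) = {0} := by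
      apply Set.eq_singleton_iff_unique_mem.mpr
      constructor
      · exact Set.mem_iInter.mpr (fun n => ⟨le_rfl, by positivity⟩)
      · intro x hx
        rw [Set.mem_iInter] at hx
        have hx0 : 0 ≤ x := (hx 0).1
        by_contra hne
        have hxpos : 0 < x := lt_of_le_of_ne hx0 (Ne.symm hne)
        obtain ⟨n, hn⟩ := exists_nat_one_div_lt hxpos
        exact absurd ((hx n).2) (not_le.mpr hn)
    have h0 : μa (⋂ n : ℕ, Icc (0:ℝ) (1/(n+1))) = 0 := by
      rw [hset, hμa]
      exact (withDensity_absolutelyContinuous volume f) Real.volume_singleton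
    have hanti : Antitone (fun n : ℕ => Icc (0:ℝ) (1/(n+1))) := by
      intro m n hmn
      apply Icc_subset_Icc le_rfl
      apply one_div_le_one_div_of_le (by positivity)
      exact_mod_cast Nat.add_le_add_right hmn 1
    have htend := tendsto_measure_iInter_atTop (μ := μa)
      (fun n => measurableSet_Icc.nullMeasurableSet) hanti ⟨0, measure_ne_top _ _⟩
    rw [h0] at htend
    have htendR : Filter.Tendsto (fun n : ℕ => (μa (Icc (0:ℝ) (1/(n+1)))).toReal)
        Filter.atTop (nhds 0) := by
      have := (ENNReal.tendsto_toReal (by simp : (0:ℝ≥0∞) ≠ ⊤)).comp htend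
      simpa [Function.comp_def] using this
    have ev1 : ∀ᶠ n : ℕ in Filter.atTop, (μa (Icc (0:ℝ) (1/(n+1)))).toReal < s/4 :=
      htendR.eventually_lt_const (by positivity)
    have htend2 : Filter.Tendsto (fun n : ℕ => s * (1/(n+1))) Filter.atTop (nhds 0) := by
      have := tendsto_one_div_add_atTop_nhds_zero_nat.const_mul s
      simpa using this
    have ev2 : ∀ᶠ n : ℕ in Filter.atTop, s * (1/(n+1)) < c^2/16 :=
      htend2.eventually_lt_const (by positivity)
    obtain ⟨n, h1, h2⟩ := (ev1.and ev2).exists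
    refine ⟨1/(n+1), by positivity, ?_, h1.le, h2⟩
    rw [div_le_one (by positivity)]
    simp [Nat.cast_nonneg]
  set ε : ℝ := s*δ/c with hε
  have hε_pos : 0 < ε := by positivity
  have hε_lt : ε < 1 := by
    clear_value s c ε
    have hc1 : c < 1 := by rw [hc]; linarith [hα.1]
    rw [hε, div_lt_one hc_pos]
    nlinarith [hsδ, hc_pos, hc1]
  -- the perturbed measure
  set r₁ : ℝ≥0 := (1-ε).toNNReal with hr₁
  set r₂ : ℝ≥0 := ε.toNNReal with hr₂
  set ind : ℝ → ℝ≥0∞ := (Icc (0:ℝ) δ).indicator (fun _ => ENNReal.ofReal (s/δ)) with hind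
  set g : ℝ → ℝ≥0∞ := fun x => f x + ind x with hg
  have hg_meas : Measurable g := by
    apply (Measure.measurable_rnDeriv μ volume).add
    exact Measurable.indicator measurable_const measurableSet_Icc
  set ν : Measure ℝ := volume.withDensity g with hν
  set β : Measure ℝ := volume.withDensity ind with hβ
  have hνsplit : ν = μa + β := by
    rw [hν, hμa, hβ, hg]
    exact withDensity_add_right _ (Measurable.indicator measurable_const measurableSet_Icc)
  have hβ_eq : β = (ENNReal.ofReal (s/δ)) • (volume.restrict (Icc (0:ℝ) δ)) := by
    rw [hβ, hind, withDensity_indicator measurableSet_Icc, withDensity_const]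
  haveI Fβ : IsFiniteMeasure β := by
    rw [hβ_eq]
    constructor
    rw [Measure.smul_apply, smul_eq_mul]
    exact ENNReal.mul_lt_top ENNReal.ofReal_lt_top (by
      rw [Measure.restrict_apply_univ, Real.volume_Icc]; exact ENNReal.ofReal_lt_top)
  haveI Fν : IsFiniteMeasure ν := by rw [hνsplit]; infer_instance
  set μ' : Measure ℝ := r₁ • ν + r₂ • (Measure.dirac 0) with hμ'
  haveI Fμ' : IsFiniteMeasure μ' := by rw [hμ']; infer_instance
  -- membership of μ' in B α
  have hνIc : ν Iᶜ = 0 := by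
    rw [hν, withDensity_apply _ (measurableSet_Icc.compl), hg,
      lintegral_add_left (Measure.measurable_rnDeriv μ volume)]
    have h1 : ∫⁻ x in Iᶜ, f x ∂volume = 0 := by
      apply le_antisymm _ zero_le
      calc ∫⁻ x in Iᶜ, f x ∂volume ≤ μ Iᶜ := Measure.setLIntegral_rnDeriv_le Iᶜ
        _ = 0 := hμ.1
    have h2 : ∫⁻ x in Iᶜ, ind x ∂volume = 0 := by
      rw [hind, lintegral_indicator measurableSet_Icc, Measure.restrict_restrict measurableSet_Icc]
      have hsub : Icc (0:ℝ) δ ⊆ I := Icc_subset_Icc_right hδ1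
      have : Icc (0:ℝ) δ ∩ Iᶜ = ∅ := by
        rw [← Set.diff_eq, Set.diff_eq_empty.mpr hsub]
      rw [this]
      simp
    rw [h1, h2, add_zero]
  have hβI : ∀ x : ℝ, δ ≤ x → β (Icc 0 x) = ENNReal.ofReal s := by
    intro x hx
    rw [hβ_eq, Measure.smul_apply, smul_eq_mul,
      Measure.restrict_apply measurableSet_Icc,
      Set.inter_eq_self_of_subset_right (Icc_subset_Icc_right hx),
      Real.volume_Icc, ← ENNReal.ofReal_mul (by positivity), sub_zero,
      div_mul_cancel₀ _ hδ0.ne']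
  have hνI : ν I ≤ 1 := by
    have hb : β I = ξ I := by
      rw [hβI 1 hδ1, hs, ENNReal.ofReal_toReal (measure_ne_top ξ I)]
    calc ν I = μa I + β I := by rw [hνsplit, Measure.add_apply]
      _ = ξ I + μa I := by rw [hb, add_comm]
      _ = μ I := (happμ I).symm
      _ ≤ 1 := hμ.2.1
  have h0I : (0:ℝ) ∈ I := ⟨le_rfl, zero_le_one⟩
  have hr₁R : ((r₁ : ℝ≥0) : ℝ) = 1 - ε := Real.coe_toNNReal _ (by linarith)
  have hr₂R : ((r₂ : ℝ≥0) : ℝ) = ε := Real.coe_toNNReal _ hε_pos.le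
  have happ' : ∀ S : Set ℝ, μ' S = (r₁ : ℝ≥0∞) * ν S + (r₂ : ℝ≥0∞) * (Measure.dirac 0 S) := by
    intro S
    rw [hμ', Measure.add_apply, Measure.smul_apply, Measure.smul_apply,
      ENNReal.smul_def, ENNReal.smul_def, smul_eq_mul, smul_eq_mul]
  have htp' : ∀ x ∈ I, (μ' (Icc 0 x)).toReal = (1-ε) * (ν (Icc 0 x)).toReal + ε := by
    intro x hx
    rw [happ', Measure.dirac_apply_of_mem (Set.mem_Icc.mpr ⟨le_rfl, hx.1⟩), mul_one,
      ENNReal.toReal_add (ENNReal.mul_ne_top ENNReal.coe_ne_top (measure_ne_top ν _))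
        ENNReal.coe_ne_top,
      ENNReal.toReal_mul, ENNReal.coe_toReal, ENNReal.coe_toReal, hr₁R, hr₂R]
  -- area of the components
  have hAν_ge : 1/2 + α - s*δ ≤ ∫ x in I, (ν (Icc 0 x)).toReal := by
    have hsplitν : ∀ x : ℝ, (ν (Icc 0 x)).toReal = (μa (Icc 0 x)).toReal + (β (Icc 0 x)).toReal := by
      intro x
      rw [hνsplit, Measure.add_apply,
        ENNReal.toReal_add (measure_ne_top _ _) (measure_ne_top _ _)]
    have hsplitμ : ∀ x : ℝ, (μ (Icc 0 x)).toReal = (ξ (Icc 0 x)).toReal + (μa (Icc 0 x)).toReal := by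
      intro x
      rw [happμ, ENNReal.toReal_add (measure_ne_top _ _) (measure_ne_top _ _)]
    have hIν : ∫ x in I, (ν (Icc 0 x)).toReal
        = (∫ x in I, (μa (Icc 0 x)).toReal) + ∫ x in I, (β (Icc 0 x)).toReal := by
      simp only [hsplitν]
      exact integral_add (Afun_integrableOn μa) (Afun_integrableOn β)
    have hIμ : ∫ x in I, (μ (Icc 0 x)).toReal
        = (∫ x in I, (ξ (Icc 0 x)).toReal) + ∫ x in I, (μa (Icc 0 x)).toReal := by
      simp only [hsplitμ]
      exact integral_add (Afun_integrableOn ξ) (Afun_integrableOn μa)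
    have hAξ : ∫ x in I, (ξ (Icc 0 x)).toReal ≤ s := by
      calc ∫ x in I, (ξ (Icc 0 x)).toReal ≤ ∫ _x in I, s := by
            apply setIntegral_mono_on (Afun_integrableOn ξ)
              (integrableOn_const (by norm_num [hI, Real.volume_Icc] : volume I < ⊤).ne)
              measurableSet_Icc
            intro x hx
            exact ENNReal.toReal_mono (measure_ne_top _ _)
              (measure_mono (Icc_subset_Icc_right hx.2))
        _ = s := by
            rw [setIntegral_const, smul_eq_mul]
            norm_num [hI, Real.volume_Icc]
    have hAβ : s * (1-δ) ≤ ∫ x in I, (β (Icc 0 x)).toReal := by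
      have hsub : Icc δ 1 ⊆ I := Icc_subset_Icc_left hδ0.le
      calc s * (1-δ) = ∫ _x in Icc δ 1, s := by
            rw [setIntegral_const, Real.volume_real_Icc_of_le (by linarith), smul_eq_mul]
            ring
        _ ≤ ∫ x in Icc δ 1, (β (Icc 0 x)).toReal := by
            apply setIntegral_mono_on
              (integrableOn_const (by norm_num [Real.volume_Icc] : volume (Icc δ (1:ℝ)) < ⊤).ne)
              ((Afun_integrableOn β).mono_set hsub) measurableSet_Icc
            intro x hx
            rw [hβI x hx.1, ENNReal.toReal_ofReal hs_pos.le]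
        _ ≤ ∫ x in I, (β (Icc 0 x)).toReal := by
            apply setIntegral_mono_set (Afun_integrableOn β)
              (Filter.Eventually.of_forall (fun x => ENNReal.toReal_nonneg))
              (HasSubset.Subset.eventuallyLE hsub)
    have hAμ : 1/2 + α ≤ ∫ x in I, (μ (Icc 0 x)).toReal := hμ.2.2
    rw [hIν]
    rw [hIμ] at hAμ
    nlinarith [hAξ, hAβ, hAμ]
  have hmem' : memB α μ' := by
    refine ⟨?_, ?_, ?_⟩
    · rw [happ']
      have hd : Measure.dirac (0:ℝ) Iᶜ = 0 := by
        rw [Measure.dirac_apply]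
        simp only [Set.indicator_apply_eq_zero]
        intro h0
        exact absurd h0I (by simpa using h0)
      rw [hd, hνIc]
      simp
    · rw [happ', Measure.dirac_apply_of_mem h0I, mul_one]
      calc (r₁ : ℝ≥0∞) * ν I + (r₂ : ℝ≥0∞) ≤ (r₁ : ℝ≥0∞) * 1 + (r₂ : ℝ≥0∞) := by
            gcongr
        _ = ENNReal.ofReal (1-ε) + ENNReal.ofReal ε := by
            rw [mul_one]; rfl
        _ = 1 := by
            rw [← ENNReal.ofReal_add (by linarith) hε_pos.le]
            norm_num
    · have hcongr : ∫ x in I, (μ' (Icc 0 x)).toReal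
          = ∫ x in I, ((1-ε) * (ν (Icc 0 x)).toReal + ε) := by
        exact setIntegral_congr_fun measurableSet_Icc (fun x hx => htp' x hx)
      have heval : ∫ x in I, ((1-ε) * (ν (Icc 0 x)).toReal + ε)
          = (1-ε) * (∫ x in I, (ν (Icc 0 x)).toReal) + ε := by
        rw [integral_add ((Afun_integrableOn ν).const_mul _)
          (integrableOn_const (by norm_num [hI, Real.volume_Icc] : volume I < ⊤).ne),
          integral_const_mul, setIntegral_const, smul_eq_mul]
        norm_num [hI, Real.volume_Icc]
      rw [hcongr, heval]
      have h1ε : (0:ℝ) ≤ 1 - ε := by linarith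
      have step : (1-ε) * (1/2 + α - s*δ) ≤ (1-ε) * (∫ x in I, (ν (Icc 0 x)).toReal) :=
        mul_le_mul_of_nonneg_left hAν_ge h1ε
      have hεc : ε * c = s * δ := by
        rw [hε]; field_simp
      have hcc : c = 1/2 - α := hc
      have hsδ0 : 0 ≤ s*δ := by positivity
      clear_value s c ε
      nlinarith [step, hεc, mul_nonneg hε_pos.le hsδ0]
  -- Jfun estimate
  have hJ' : (1-ε) * (Jfun μ + Real.sqrt (s*δ)/2) ≤ Jfun μ' := by
    set φ : ℝ → ℝ := fun x => Real.sqrt ((f x).toReal) with hφ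
    set G : ℝ → ℝ := fun x => (f x).toReal + (Icc (0:ℝ) δ).indicator (fun _ => s/δ) x with hG
    have hGmeas : Measurable G :=
      ((Measure.measurable_rnDeriv μ volume).ennreal_toReal).add
        (measurable_const.indicator measurableSet_Icc)
    have hGnn : ∀ x, 0 ≤ G x := fun x =>
      add_nonneg ENNReal.toReal_nonneg (Set.indicator_nonneg (fun _ _ => by positivity) x)
    have hvolδ : volume (Icc (0:ℝ) δ) < ⊤ := by
      rw [Real.volume_Icc]; exact ENNReal.ofReal_lt_top
    have hvolI : volume (Icc (0:ℝ) 1) < ⊤ := by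
      rw [Real.volume_Icc]; exact ENNReal.ofReal_lt_top
    have hGint : IntegrableOn G (Icc (0:ℝ) 1) volume := by
      apply Integrable.add
      · exact Measure.integrable_toReal_rnDeriv.integrableOn
      · apply Integrable.mono' (integrableOn_const (C := s/δ) hvolI.ne)
          ((measurable_const.indicator measurableSet_Icc).aestronglyMeasurable)
        refine Filter.Eventually.of_forall (fun x => ?_)
        rw [Real.norm_eq_abs,
          abs_of_nonneg (Set.indicator_nonneg (fun _ _ => by positivity) x)]
        by_cases hxm : x ∈ Icc (0:ℝ) δ
        · rw [Set.indicator_of_mem hxm]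
        · rw [Set.indicator_of_notMem hxm]; positivity
    have hsqrtGint : IntegrableOn (fun x => Real.sqrt (G x)) (Icc (0:ℝ) 1) volume :=
      sqrt_integrableOn hGmeas hGnn hGint
    have hφint : IntegrableOn φ (Icc (0:ℝ) 1) volume := sqrt_rnDeriv_integrableOn μ
    have hsub1 : Icc (0:ℝ) δ ⊆ Icc (0:ℝ) 1 := Icc_subset_Icc_right hδ1
    have hsub2 : Ioc δ (1:ℝ) ⊆ Icc (0:ℝ) 1 :=
      Ioc_subset_Icc_self.trans (Icc_subset_Icc_left hδ0.le)
    have hdisj : Disjoint (Icc (0:ℝ) δ) (Ioc δ 1) := by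
      rw [Set.disjoint_left]
      intro a ha1 ha2
      exact absurd ha1.2 (not_le.mpr ha2.1)
    have hunion : Icc (0:ℝ) δ ∪ Ioc δ 1 = Icc (0:ℝ) 1 := Icc_union_Ioc_eq_Icc hδ0.le hδ1
    have hsplit : ∀ (h : ℝ → ℝ), IntegrableOn h (Icc (0:ℝ) 1) volume →
        ∫ x in Icc (0:ℝ) 1, h x = (∫ x in Icc (0:ℝ) δ, h x) + ∫ x in Ioc δ (1:ℝ), h x := by
      intro h hint
      rw [← hunion]
      exact setIntegral_union hdisj measurableSet_Ioc (hint.mono_set (hunion ▸ hsub1))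
        (hint.mono_set (hunion ▸ hsub2))
    -- rnDeriv of μ'
    have hrn' : ∀ᵐ x ∂volume, μ'.rnDeriv volume x = r₁ • g x := by
      have h0 := Measure.rnDeriv_add (r₁ • ν) (r₂ • Measure.dirac 0) volume
      have h1 := Measure.rnDeriv_smul_left ν volume r₁
      have h2 := Measure.rnDeriv_smul_left (Measure.dirac (0:ℝ)) volume r₂
      have h3 := Measure.rnDeriv_withDensity volume hg_meas
      have h4 := dirac_perp.rnDeriv_ae_eq_zero
      filter_upwards [h0, h1, h2, h3, h4] with x hx0 hx1 hx2 hx3 hx4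
      rw [hμ', hx0, Pi.add_apply, hx1, hx2, Pi.smul_apply, Pi.smul_apply, hx4, hx3]
      simp
    have hptwise : ∀ᵐ x ∂volume,
        Real.sqrt ((μ'.rnDeriv volume x).toReal) = Real.sqrt (1-ε) * Real.sqrt (G x) := by
      filter_upwards [hrn', Measure.rnDeriv_lt_top μ volume] with x hx hfx
      have hindx_ne : ind x ≠ ⊤ := by
        rw [hind]
        by_cases hxm : x ∈ Icc (0:ℝ) δ
        · rw [Set.indicator_of_mem hxm]; exact ENNReal.ofReal_ne_top
        · rw [Set.indicator_of_notMem hxm]; exact ENNReal.zero_ne_top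
      have hgx : (g x).toReal = G x := by
        simp only [hg, hG]
        rw [ENNReal.toReal_add hfx.ne hindx_ne]
        congr 1
        rw [hind]
        by_cases hxm : x ∈ Icc (0:ℝ) δ
        · rw [Set.indicator_of_mem hxm, Set.indicator_of_mem hxm,
            ENNReal.toReal_ofReal (by positivity)]
        · rw [Set.indicator_of_notMem hxm, Set.indicator_of_notMem hxm, ENNReal.toReal_zero]
      rw [hx, ENNReal.toReal_smul, NNReal.smul_def, hr₁R, hgx]
      exact Real.sqrt_mul (by linarith : (0:ℝ) ≤ 1-ε) _
    have hJ'eq : Jfun μ' = Real.sqrt (1-ε) * ∫ x in Icc (0:ℝ) 1, Real.sqrt (G x) := by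
      have : Jfun μ' = ∫ x in Icc (0:ℝ) 1, Real.sqrt ((μ'.rnDeriv volume x).toReal) := rfl
      rw [this,
        setIntegral_congr_ae measurableSet_Icc
          (by filter_upwards [hptwise] with x hx _ using hx),
        integral_const_mul]
    -- lower bounds on the pieces
    have hIoc_eq : ∫ x in Ioc δ (1:ℝ), Real.sqrt (G x) = ∫ x in Ioc δ (1:ℝ), φ x := by
      apply setIntegral_congr_fun measurableSet_Ioc
      intro x hx
      have hxm : x ∉ Icc (0:ℝ) δ := fun hm => absurd hm.2 (not_le.mpr hx.1)
      simp only [hG, hφ, Set.indicator_of_notMem hxm, add_zero]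
    have hIcc_ge : Real.sqrt (s*δ) ≤ ∫ x in Icc (0:ℝ) δ, Real.sqrt (G x) := by
      have hconst : ∀ x ∈ Icc (0:ℝ) δ, Real.sqrt (s/δ) ≤ Real.sqrt (G x) := by
        intro x hx
        apply Real.sqrt_le_sqrt
        simp only [hG, Set.indicator_of_mem hx]
        linarith [ENNReal.toReal_nonneg (a := f x)]
      calc Real.sqrt (s*δ) = Real.sqrt (s/δ) * δ := (sqrt_div_mul hs_pos.le hδ0).symm
        _ = ∫ _x in Icc (0:ℝ) δ, Real.sqrt (s/δ) := by
            rw [setIntegral_const, Real.volume_real_Icc_of_le hδ0.le, smul_eq_mul, sub_zero]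
            ring
        _ ≤ ∫ x in Icc (0:ℝ) δ, Real.sqrt (G x) :=
            setIntegral_mono_on (integrableOn_const hvolδ.ne)
              (hsqrtGint.mono_set hsub1) measurableSet_Icc hconst
    have hφδ_le : ∫ x in Icc (0:ℝ) δ, φ x ≤ Real.sqrt (s*δ)/2 := by
      have hw_pos : 0 < Real.sqrt (s/δ) := Real.sqrt_pos.mpr (by positivity)
      set w : ℝ := Real.sqrt (s/δ) with hw
      have hwq : w * δ = Real.sqrt (s*δ) := sqrt_div_mul hs_pos.le hδ0
      have hkey : Real.sqrt (s*δ) * w = s := by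
        rw [hw, ← Real.sqrt_mul (by positivity)]
        rw [show s*δ*(s/δ) = s^2 by field_simp]
        exact Real.sqrt_sq hs_pos.le
      have hFδ' : ∫ x in Icc (0:ℝ) δ, (f x).toReal ≤ s/4 := by
        have heq : ∫ x in Icc (0:ℝ) δ, (f x).toReal = (μa (Icc (0:ℝ) δ)).toReal := by
          rw [integral_toReal ((Measure.measurable_rnDeriv μ volume).aemeasurable.restrict)
            (ae_restrict_of_ae (Measure.rnDeriv_lt_top μ volume)), hμa,
            withDensity_apply _ measurableSet_Icc]
        rw [heq]; exact hFδ
      have hptle : ∀ x ∈ Icc (0:ℝ) δ, φ x ≤ (f x).toReal/(2*(w/2)) + (w/2)/2 :=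
        fun x _ => sqrt_le_am ENNReal.toReal_nonneg (by positivity)
      have hfint : IntegrableOn (fun x => (f x).toReal) (Icc (0:ℝ) δ) volume :=
        Measure.integrable_toReal_rnDeriv.integrableOn
      calc ∫ x in Icc (0:ℝ) δ, φ x
          ≤ ∫ x in Icc (0:ℝ) δ, ((f x).toReal/(2*(w/2)) + (w/2)/2) :=
            setIntegral_mono_on (hφint.mono_set hsub1)
              ((hfint.div_const _).add (integrableOn_const hvolδ.ne))
              measurableSet_Icc hptle
        _ = (∫ x in Icc (0:ℝ) δ, (f x).toReal)/(2*(w/2)) + ((w/2)/2)*δ := by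
            rw [integral_add (hfint.div_const _) (integrableOn_const hvolδ.ne),
              integral_div, setIntegral_const, Real.volume_real_Icc_of_le hδ0.le, smul_eq_mul, sub_zero]
            ring
        _ ≤ Real.sqrt (s*δ)/2 := by
            have h1 : (∫ x in Icc (0:ℝ) δ, (f x).toReal)/(2*(w/2)) ≤ (s/4)/w := by
              rw [show 2*(w/2) = w by ring]
              exact div_le_div_of_nonneg_right hFδ' hw_pos.le
            have h2 : (s/4)/w = Real.sqrt (s*δ)/4 := by
              rw [eq_div_iff (by norm_num : (4:ℝ) ≠ 0)]
              rw [div_mul_eq_mul_div, div_eq_iff hw_pos.ne']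
              nlinarith [hkey]
            have h3 : ((w/2)/2)*δ = Real.sqrt (s*δ)/4 := by
              rw [show ((w/2)/2)*δ = (w*δ)/4 by ring, hwq]
            linarith
    -- assemble
    have hJφ : Jfun μ = ∫ x in Icc (0:ℝ) 1, φ x := rfl
    have hJsplit := hsplit φ hφint
    have hGsplit := hsplit (fun x => Real.sqrt (G x)) hsqrtGint
    have hGsum : Jfun μ + Real.sqrt (s*δ)/2 ≤ ∫ x in Icc (0:ℝ) 1, Real.sqrt (G x) := by
      rw [hGsplit, hIoc_eq, hJφ, hJsplit]
      linarith [hIcc_ge, hφδ_le]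
    have hs1 : 1-ε ≤ Real.sqrt (1-ε) := by
      calc 1-ε = |1-ε| := (abs_of_nonneg (by linarith)).symm
        _ = Real.sqrt ((1-ε)^2) := (Real.sqrt_sq_eq_abs _).symm
        _ ≤ Real.sqrt (1-ε) := Real.sqrt_le_sqrt (by nlinarith)
    have hG0 : 0 ≤ ∫ x in Icc (0:ℝ) 1, Real.sqrt (G x) :=
      setIntegral_nonneg measurableSet_Icc (fun x _ => Real.sqrt_nonneg _)
    have hJμ0 : 0 ≤ Jfun μ := setIntegral_nonneg measurableSet_Icc
      (fun x _ => Real.sqrt_nonneg _)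
    rw [hJ'eq]
    calc (1-ε) * (Jfun μ + Real.sqrt (s*δ)/2)
        ≤ (1-ε) * ∫ x in Icc (0:ℝ) 1, Real.sqrt (G x) :=
          mul_le_mul_of_nonneg_left hGsum (by linarith)
      _ ≤ Real.sqrt (1-ε) * ∫ x in Icc (0:ℝ) 1, Real.sqrt (G x) :=
          mul_le_mul_of_nonneg_right hs1 hG0
  -- contradiction
  have hJle : Jfun μ' ≤ Jsup α := le_Jsup hmem'
  have hJ1 : Jfun μ ≤ 1 := Jfun_le_one μ hμ.2.1
  have hJ0 : 0 ≤ Jfun μ := setIntegral_nonneg measurableSet_Icc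
    (fun x _ => Real.sqrt_nonneg _)
  set q : ℝ := Real.sqrt (s*δ) with hq
  have hq_pos : 0 < q := Real.sqrt_pos.mpr (by positivity)
  have hq_sq : q^2 = s*δ := Real.sq_sqrt (by positivity)
  have hq_lt : q < c/4 := by
    have h2 : q^2 < (c/4)^2 := by rw [hq_sq]; nlinarith
    exact lt_of_pow_lt_pow_left₀ 2 (by positivity) h2
  have hfinal : Jfun μ < Jfun μ' := by
    clear_value s c ε q
    have hε_eq : ε = q^2/c := by rw [hq_sq, hε]
    have hclt : c < 1 := by simp only [hc]; linarith [hα.1]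
    have hε4 : ε < q/4 := by
      rw [hε_eq, div_lt_div_iff₀ hc_pos (by norm_num : (0:ℝ) < 4)]
      have := mul_lt_mul_of_pos_left hq_lt hq_pos
      nlinarith [this]
    have hq14 : q < 1/4 := by nlinarith
    calc Jfun μ < (1-ε) * (Jfun μ + q/2) := by
          nlinarith [mul_lt_mul_of_pos_right hε4 (show (0:ℝ) < Jfun μ + q/2 by linarith),
            mul_le_mul_of_nonneg_left hJ1 (show (0:ℝ) ≤ q/4 by positivity),
            mul_lt_mul_of_pos_left hq14 hq_pos]
      _ ≤ Jfun μ' := hJ'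
  rw [hopt] at hfinal
  exact absurd (lt_of_le_of_lt hJle hfinal) (lt_irrefl _)

end Stmt10Aux


open Stmt10Aux in
/-- The maximizer of `J` over `B_α` is unique. -/
theorem stmt10 (α : ℝ) (hα : α ∈ Set.Ioo (0 : ℝ) (1 / 2)) (μ₁ μ₂ : Measure ℝ)
    (hμ₁ : memB α μ₁) (hμ₂ : memB α μ₂)
    (hopt₁ : Jfun μ₁ = Jsup α) (hopt₂ : Jfun μ₂ = Jsup α) :
    μ₁ = μ₂ := by
  haveI F1 : IsFiniteMeasure μ₁ := memB_finite hμ₁.1 hμ₁.2.1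
  haveI F2 : IsFiniteMeasure μ₂ := memB_finite hμ₂.1 hμ₂.2.1
  have hae := ac_parts_eq hμ₁ hμ₂ hopt₁ hopt₂
  have hs1 := singularPart_zero_of_opt hα hμ₁ hopt₁
  have hs2 := singularPart_zero_of_opt hα hμ₂ hopt₂
  calc μ₁ = μ₁.singularPart volume + volume.withDensity (μ₁.rnDeriv volume) :=
        (μ₁.haveLebesgueDecomposition_add volume)
    _ = volume.withDensity (μ₂.rnDeriv volume) := by
        rw [hs1, zero_add, withDensity_congr_ae hae]
    _ = μ₂.singularPart volume + volume.withDensity (μ₂.rnDeriv volume) := by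
        rw [hs2, zero_add]
    _ = μ₂ := (μ₂.haveLebesgueDecomposition_add volume).symm
end

section
/- Let c = c_α be the unique positive solution of ((1+c)/c)·(1 − log(1+c)/c) = 1/2 + α, and let μ_α be the measure on [0,1] with density x ↦ (1+c)/(1+cx)² with respect to Lebesgue measure (so that μ_α([0,x]) = (1+c)x/(1+cx)). Then μ_α ∈ B_α, J(μ_α) = √(1+c)·log(1+c)/c = J_α, and any ν ∈ B_α with J(ν) = J_α equals μ_α; that is, μ_α is the unique maximizer of J over B_α. -/
set_option maxHeartbeats 1000000
open Set
open scoped ENNReal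


open MeasureTheory

/-- The measure on `[0,1]` with density `x ↦ (1+c)/(1+cx)²` with respect to Lebesgue
measure. -/
noncomputable def muAlpha (c : ℝ) : Measure ℝ :=
  (volume.restrict (Set.Icc (0:ℝ) 1)).withDensity
    (fun x => ENNReal.ofReal ((1 + c) / (1 + c * x) ^ 2))


lemma pos_den (c : ℝ) (hc : 0 < c) {t : ℝ} (ht : 0 ≤ t) : 0 < 1 + c * t := by positivity

lemma int1 (c : ℝ) (hc : 0 < c) {x : ℝ} (hx : 0 ≤ x) :
    ∫ t in Icc (0:ℝ) x, (1+c)/(1+c*t)^2 = (1+c)*x/(1+c*x) := by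
  rw [MeasureTheory.integral_Icc_eq_integral_Ioc, ← intervalIntegral.integral_of_le hx]
  have hI : ∀ t ∈ uIcc (0:ℝ) x, 0 < 1 + c * t := by
    intro t ht
    rw [uIcc_of_le hx] at ht
    exact pos_den c hc ht.1
  rw [intervalIntegral.integral_eq_sub_of_hasDerivAt
    (f := fun t => -(1+c)/(c*(1+c*t))) (fun t ht => by
      have h1 : HasDerivAt (fun x : ℝ => 1 + c*x) c t := by
        simpa using ((hasDerivAt_id t).const_mul c).const_add 1
      have hu : HasDerivAt (fun x : ℝ => c*(1+c*x)) (c*c) t := by simpa using h1.const_mul c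
      have hne : c*(1+c*t) ≠ 0 := by have := hI t ht; positivity
      have hpt : (1 + c*t) ≠ 0 := (hI t ht).ne'
      have := (hasDerivAt_const t (-(1+c))).div hu hne
      convert this using 1
      · rfl
      · rfl
      field_simp
      ring)]
  · have h0 : (1:ℝ) + c * 0 = 1 := by ring
    have hx1 : (0:ℝ) < 1 + c * x := pos_den c hc hx
    field_simp
    ring
  · apply ContinuousOn.intervalIntegrable
    apply ContinuousOn.div continuousOn_const
    · fun_prop
    · intro t ht
      have := hI t ht
      positivity

lemma int2 (c : ℝ) (hc : 0 < c) (s : ℝ) :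
    ∫ t in Icc (0:ℝ) 1, s/(1+c*t) = s * Real.log (1+c) / c := by
  rw [MeasureTheory.integral_Icc_eq_integral_Ioc,
    ← intervalIntegral.integral_of_le (zero_le_one)]
  have hI : ∀ t ∈ uIcc (0:ℝ) 1, 0 < 1 + c * t := by
    intro t ht
    rw [uIcc_of_le zero_le_one] at ht
    exact pos_den c hc ht.1
  rw [intervalIntegral.integral_eq_sub_of_hasDerivAt
    (f := fun t => s * Real.log (1+c*t) / c) (fun t ht => by
      have h1 : HasDerivAt (fun x : ℝ => 1 + c*x) c t := by
        simpa using ((hasDerivAt_id t).const_mul c).const_add 1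
      have hl : HasDerivAt (fun x : ℝ => Real.log (1+c*x)) (c/(1+c*t)) t :=
        h1.log (hI t ht).ne'
      have hpt : (1 + c*t) ≠ 0 := (hI t ht).ne'
      have := (hl.const_mul s).div_const c
      convert this using 1
      · rfl
      field_simp)]
  · norm_num
  · apply ContinuousOn.intervalIntegrable
    apply ContinuousOn.div continuousOn_const (by fun_prop)
    intro t ht
    exact (hI t ht).ne'

lemma int3 (c : ℝ) (hc : 0 < c) :
    ∫ x in Icc (0:ℝ) 1, (1+c)*x/(1+c*x) = ((1+c)/c) * (1 - Real.log (1+c)/c) := by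
  rw [MeasureTheory.integral_Icc_eq_integral_Ioc,
    ← intervalIntegral.integral_of_le (zero_le_one)]
  have hI : ∀ t ∈ uIcc (0:ℝ) 1, 0 < 1 + c * t := by
    intro t ht
    rw [uIcc_of_le zero_le_one] at ht
    exact pos_den c hc ht.1
  rw [intervalIntegral.integral_eq_sub_of_hasDerivAt
    (f := fun x => ((1+c)/c) * (x - Real.log (1+c*x)/c)) (fun t ht => by
      have h1 : HasDerivAt (fun x : ℝ => 1 + c*x) c t := by
        simpa using ((hasDerivAt_id t).const_mul c).const_add 1
      have hl : HasDerivAt (fun x : ℝ => Real.log (1+c*x)) (c/(1+c*t)) t :=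
        h1.log (hI t ht).ne'
      have hpt : (1 + c*t) ≠ 0 := (hI t ht).ne'
      have := ((hasDerivAt_id t).sub (hl.div_const c)).const_mul ((1+c)/c)
      convert this using 1
      · rfl
      · rfl
      field_simp
      ring)]
  · norm_num
  · apply ContinuousOn.intervalIntegrable
    apply ContinuousOn.div (by fun_prop) (by fun_prop)
    intro t ht
    exact (hI t ht).ne'


lemma area_eq (ν : Measure ℝ) [IsFiniteMeasure ν] :
    ∫ x in Icc (0:ℝ) 1, (ν (Icc 0 x)).toReal
      = (∫⁻ t in Icc (0:ℝ) 1, ENNReal.ofReal (1 - t) ∂ν).toReal := by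
  have hmono : Monotone (fun x : ℝ => ν (Icc 0 x)) :=
    fun a b hab => measure_mono (Icc_subset_Icc le_rfl hab)
  have hmeas : Measurable (fun x : ℝ => ν (Icc 0 x)) := hmono.measurable
  rw [integral_toReal (hmeas.aemeasurable.restrict)
    (ae_of_all _ fun x => lt_of_le_of_lt (measure_mono (subset_univ _)) (measure_lt_top ν _))]
  congr 1
  set F : ℝ → ℝ → ℝ≥0∞ := fun x t => ({q : ℝ × ℝ | q.2 ≤ q.1}.indicator 1) (x, t) with hF
  have hFm : AEMeasurable (Function.uncurry F)
      ((volume.restrict (Icc (0:ℝ) 1)).prod (ν.restrict (Icc (0:ℝ) 1))) := by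
    have : Function.uncurry F = ({q : ℝ × ℝ | q.2 ≤ q.1}.indicator 1) := by
      funext q; cases q; rfl
    rw [this]
    exact (Measurable.indicator measurable_one
      (isClosed_le continuous_snd continuous_fst).measurableSet).aemeasurable
  have key := lintegral_lintegral_swap hFm
  have h1 : ∫⁻ x in Icc (0:ℝ) 1, ν (Icc 0 x) ∂volume
      = ∫⁻ x in Icc (0:ℝ) 1, ∫⁻ t in Icc (0:ℝ) 1, F x t ∂ν ∂volume := by
    apply setLIntegral_congr_fun measurableSet_Icc
    intro x hx
    have hFt : ∀ t : ℝ, F x t = (Iic x).indicator 1 t := by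
      intro t
      simp only [hF, Set.indicator_apply, mem_setOf_eq, mem_Iic, Pi.one_apply]
    simp_rw [hFt]
    rw [lintegral_indicator_one measurableSet_Iic, Measure.restrict_apply measurableSet_Iic]
    congr 1
    ext t
    simp only [mem_Icc, mem_inter_iff, mem_Iic]
    exact ⟨fun h => ⟨h.2, h.1, h.2.trans hx.2⟩, fun h => ⟨h.2.1, h.1⟩⟩
  have h2 : ∫⁻ t in Icc (0:ℝ) 1, ∫⁻ x in Icc (0:ℝ) 1, F x t ∂volume ∂ν
      = ∫⁻ t in Icc (0:ℝ) 1, ENNReal.ofReal (1 - t) ∂ν := by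
    apply setLIntegral_congr_fun measurableSet_Icc
    intro t ht
    have hFt : ∀ x : ℝ, F x t = (Ici t).indicator 1 x := by
      intro x
      simp only [hF, Set.indicator_apply, mem_setOf_eq, mem_Ici, Pi.one_apply]
    simp_rw [hFt]
    rw [lintegral_indicator_one measurableSet_Ici, Measure.restrict_apply measurableSet_Ici]
    have : Ici t ∩ Icc (0:ℝ) 1 = Icc t 1 := by
      ext x
      simp only [mem_Icc, mem_inter_iff, mem_Ici]
      exact ⟨fun h => ⟨h.1, h.2.2⟩, fun h => ⟨h.1, ht.1.trans h.1, h.2⟩⟩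
    rw [this, Real.volume_Icc]
  rw [h1, key, h2]


lemma muAlpha_eq' (c : ℝ) : muAlpha c =
    volume.withDensity ((Icc (0:ℝ) 1).indicator
      (fun x => ENNReal.ofReal ((1 + c) / (1 + c * x) ^ 2))) := by
  rw [muAlpha, withDensity_indicator measurableSet_Icc]

lemma gE_meas (c : ℝ) : Measurable (fun x => ENNReal.ofReal ((1 + c) / (1 + c * x) ^ 2)) := by
  fun_prop

lemma muAlpha_rnDeriv (c : ℝ) :
    (muAlpha c).rnDeriv volume =ᵐ[volume]
      (Icc (0:ℝ) 1).indicator (fun x => ENNReal.ofReal ((1 + c) / (1 + c * x) ^ 2)) := by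
  rw [muAlpha_eq']
  exact Measure.rnDeriv_withDensity volume ((gE_meas c).indicator measurableSet_Icc)

lemma g_cont (c : ℝ) (hc : 0 < c) :
    ContinuousOn (fun x => (1 + c) / (1 + c * x) ^ 2) (Icc (0:ℝ) 1) := by
  apply ContinuousOn.div continuousOn_const (by fun_prop)
  intro t ht
  have : (0:ℝ) < 1 + c * t := by have := ht.1; positivity
  positivity

lemma muAlpha_cdf (c : ℝ) (hc : 0 < c) {x : ℝ} (hx : x ∈ Icc (0:ℝ) 1) :
    muAlpha c (Icc 0 x) = ENNReal.ofReal ((1+c)*x/(1+c*x)) := by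
  rw [muAlpha, withDensity_apply _ measurableSet_Icc,
    Measure.restrict_restrict measurableSet_Icc]
  have hint : Icc (0:ℝ) x ∩ Icc 0 1 = Icc 0 x := by
    rw [Set.Icc_inter_Icc]
    simp [hx.2, max_self, min_eq_left]
  rw [hint, ← ofReal_integral_eq_lintegral_ofReal]
  · rw [int1 c hc hx.1]
  · exact ((g_cont c hc).mono (Icc_subset_Icc le_rfl hx.2)).integrableOn_compact isCompact_Icc
  · filter_upwards [ae_restrict_mem measurableSet_Icc] with t ht
    have : (0:ℝ) < 1 + c * t := by have := ht.1; positivity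
    positivity

lemma muAlpha_compl (c : ℝ) : muAlpha c (Icc (0:ℝ) 1)ᶜ = 0 := by
  rw [muAlpha, withDensity_apply _ measurableSet_Icc.compl,
    Measure.restrict_restrict measurableSet_Icc.compl, compl_inter_self]
  simp

lemma Jfun_muAlpha (c : ℝ) (hc : 0 < c) :
    Jfun (muAlpha c) = ∫ x in Icc (0:ℝ) 1, Real.sqrt (1+c)/(1+c*x) := by
  rw [Jfun]
  apply integral_congr_ae
  filter_upwards [ae_restrict_of_ae (muAlpha_rnDeriv c),
    ae_restrict_mem measurableSet_Icc] with x hx hmem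
  have h1 : (0:ℝ) < 1 + c * x := by have := hmem.1; positivity
  rw [hx, indicator_of_mem hmem, ENNReal.toReal_ofReal (by positivity),
    Real.sqrt_div (by positivity : (0:ℝ) ≤ 1+c), Real.sqrt_sq h1.le]

lemma main_bound (α c : ℝ) (hα : α ∈ Set.Ioo (0:ℝ) (1/2)) (hc : 0 < c)
    (hceq : ((1 + c) / c) * (1 - Real.log (1 + c) / c) = 1 / 2 + α)
    (ν : Measure ℝ) (hν : memB α ν) :
    Jfun ν ≤ Real.sqrt (1+c) * Real.log (1+c) / c ∧
      (Jfun ν = Real.sqrt (1+c) * Real.log (1+c) / c → ν = muAlpha c) := by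
  obtain ⟨hcompl, hmass, harea⟩ := hν
  haveI hfin : IsFiniteMeasure ν := by
    constructor
    rw [← measure_add_measure_compl (measurableSet_Icc (a := (0:ℝ)) (b := 1)), hcompl, add_zero]
    exact lt_of_le_of_lt hmass (by norm_num)
  set s : ℝ := Real.sqrt (1+c) with hs
  have hs0 : 0 < s := Real.sqrt_pos.mpr (by linarith)
  have hs2 : s^2 = 1 + c := Real.sq_sqrt (by linarith)
  set p : ℝ → ℝ := fun x => (1 + c*x)/(2*s) with hp
  have hppos : ∀ x : ℝ, 0 ≤ x → 0 < p x := by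
    intro x hx
    have : 0 < 1 + c * x := by positivity
    positivity
  set f := ν.rnDeriv volume with hf
  have hfm : Measurable f := Measure.measurable_rnDeriv ν volume
  set fR : ℝ → ℝ := fun x => (f x).toReal with hfR
  have hflt : ∀ᵐ x ∂volume, f x < ⊤ := Measure.rnDeriv_lt_top ν volume
  have hfint : Integrable fR volume := Measure.integrable_toReal_rnDeriv
  -- pointwise AM-GM
  have hptw : ∀ᵐ x ∂(volume.restrict (Icc (0:ℝ) 1)),
      Real.sqrt (fR x) ≤ 1/(4*p x) + p x * fR x := by
    filter_upwards [ae_restrict_mem measurableSet_Icc] with x hx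
    have hpx : 0 < p x := hppos x hx.1
    have ht : 0 ≤ fR x := ENNReal.toReal_nonneg
    have hsq : Real.sqrt (fR x) ^ 2 = fR x := Real.sq_sqrt ht
    rw [show 1/(4*p x) + p x * fR x = (1 + 4*(p x)^2 * fR x)/(4*p x) by field_simp,
      le_div_iff₀ (by positivity)]
    nlinarith [sq_nonneg (2 * p x * Real.sqrt (fR x) - 1), Real.sqrt_nonneg (fR x)]
  -- integrability
  have hpm : Continuous p := by fun_prop
  have hint1 : IntegrableOn (fun x => 1/(4*p x)) (Icc (0:ℝ) 1) := by
    apply ContinuousOn.integrableOn_compact isCompact_Icc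
    apply ContinuousOn.div continuousOn_const (by fun_prop)
    intro x hx
    have hpx := hppos x hx.1
    exact (by linarith : (0:ℝ) < 4 * p x).ne'
  have hfRsm : AEStronglyMeasurable fR (volume.restrict (Icc (0:ℝ) 1)) :=
    (hfm.ennreal_toReal.aestronglyMeasurable).restrict
  have hint2 : IntegrableOn (fun x => p x * fR x) (Icc (0:ℝ) 1) := by
    apply Integrable.mono' ((hfint.restrict).const_mul ((1+c)/(2*s)))
      ((hpm.aestronglyMeasurable.restrict).mul hfRsm)
    filter_upwards [ae_restrict_mem measurableSet_Icc] with x hx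
    have hpx : 0 < p x := hppos x hx.1
    have ht : 0 ≤ fR x := ENNReal.toReal_nonneg
    show |p x * fR x| ≤ _
    rw [abs_of_nonneg (mul_nonneg hpx.le ht)]
    apply mul_le_mul_of_nonneg_right _ ht
    rw [hp]
    have h2s : (0:ℝ) < 2*s := by linarith
    exact (div_le_div_iff_of_pos_right h2s).mpr (by nlinarith [hx.1, hx.2])
  have hint3 : IntegrableOn (fun x => Real.sqrt (fR x)) (Icc (0:ℝ) 1) := by
    apply Integrable.mono' (hint1.add hint2)
      (Real.continuous_sqrt.comp_aestronglyMeasurable hfRsm)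
    filter_upwards [hptw] with x hx
    rwa [Real.norm_eq_abs, abs_of_nonneg (Real.sqrt_nonneg _)]
  -- step C : J ν ≤ I0 + ∫ p * fR
  have hC : Jfun ν ≤ (∫ x in Icc (0:ℝ) 1, 1/(4*p x)) + ∫ x in Icc (0:ℝ) 1, p x * fR x := by
    rw [Jfun, ← integral_add hint1 hint2]
    exact integral_mono_ae hint3 (hint1.add hint2) hptw
  -- step D : lintegral comparisons
  set P : ℝ → ℝ≥0∞ := fun x => ENNReal.ofReal (p x) with hP
  have hPm : Measurable P := (hpm.measurable).ennreal_ofReal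
  have hD1 : ∫ x in Icc (0:ℝ) 1, p x * fR x
      = (∫⁻ x in Icc (0:ℝ) 1, P x * f x ∂volume).toReal := by
    rw [← integral_toReal (f := fun x => P x * f x) ((hPm.mul hfm).aemeasurable.restrict)
      (by filter_upwards [ae_restrict_of_ae hflt] with x hx
          exact ENNReal.mul_lt_top ENNReal.ofReal_lt_top hx)]
    apply integral_congr_ae
    filter_upwards [ae_restrict_of_ae hflt, ae_restrict_mem measurableSet_Icc] with x hx hmem
    rw [ENNReal.toReal_mul, ENNReal.toReal_ofReal (hppos x hmem.1).le]
  have hD2 : ∫⁻ x in Icc (0:ℝ) 1, P x * f x ∂volume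
      = ∫⁻ x in Icc (0:ℝ) 1, P x ∂(volume.withDensity f) := by
    rw [restrict_withDensity measurableSet_Icc,
      lintegral_withDensity_eq_lintegral_mul _ hfm hPm]
    exact lintegral_congr fun x => mul_comm _ _
  have hD3 : ∫⁻ x in Icc (0:ℝ) 1, P x ∂(volume.withDensity f)
      ≤ ∫⁻ x in Icc (0:ℝ) 1, P x ∂ν :=
    lintegral_mono' (Measure.restrict_mono subset_rfl
      (Measure.withDensity_rnDeriv_le ν volume)) le_rfl
  set T : ℝ≥0∞ := ∫⁻ x in Icc (0:ℝ) 1, ENNReal.ofReal x ∂ν with hT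
  set S : ℝ≥0∞ := ∫⁻ x in Icc (0:ℝ) 1, ENNReal.ofReal (1-x) ∂ν with hS
  have hD4 : ∫⁻ x in Icc (0:ℝ) 1, P x ∂ν
      = ENNReal.ofReal (1/(2*s)) * ν (Icc 0 1) + ENNReal.ofReal (c/(2*s)) * T := by
    have hcongr : ∫⁻ x in Icc (0:ℝ) 1, P x ∂ν
        = ∫⁻ x in Icc (0:ℝ) 1,
            (ENNReal.ofReal (1/(2*s)) + ENNReal.ofReal (c/(2*s)) * ENNReal.ofReal x) ∂ν := by
      apply setLIntegral_congr_fun measurableSet_Icc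
      intro x hx
      beta_reduce
      rw [hP, ← ENNReal.ofReal_mul (div_nonneg hc.le (by linarith)),
        ← ENNReal.ofReal_add (div_nonneg zero_le_one (by linarith))
          (mul_nonneg (div_nonneg hc.le (by linarith)) hx.1)]
      congr 1
      field_simp
      rfl
    rw [hcongr, lintegral_add_left measurable_const, setLIntegral_const,
      lintegral_const_mul _ ENNReal.measurable_ofReal]
  have hTS : T + S = ν (Icc 0 1) := by
    rw [hT, hS, ← lintegral_add_left ENNReal.measurable_ofReal]
    rw [show (ν (Icc (0:ℝ) 1)) = ∫⁻ _ in Icc (0:ℝ) 1, 1 ∂ν from (setLIntegral_one _).symm]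
    apply setLIntegral_congr_fun measurableSet_Icc
    intro x hx
    beta_reduce
    rw [← ENNReal.ofReal_add hx.1 (by linarith [hx.2]), ← ENNReal.ofReal_one]
    congr 1
    ring
  have hνlt : ν (Icc (0:ℝ) 1) < ⊤ := measure_lt_top ν _
  have hTlt : T ≠ ⊤ := fun h => by rw [← hTS, h] at hνlt; simp at hνlt
  have hSlt : S ≠ ⊤ := fun h => by rw [← hTS, h] at hνlt; simp at hνlt
  set Mr := (ν (Icc (0:ℝ) 1)).toReal with hMr
  set Tr := T.toReal with hTr
  set Sr := S.toReal with hSr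
  have hMr1 : Mr ≤ 1 := by
    have := ENNReal.toReal_mono (by norm_num) hmass
    simpa using this
  have hSrge : 1/2 + α ≤ Sr := by
    rw [area_eq ν] at harea
    exact harea
  have hsum : Tr + Sr = Mr := by
    rw [hTr, hSr, ← ENNReal.toReal_add hTlt hSlt, hTS]
  have hPne : ∫⁻ x in Icc (0:ℝ) 1, P x ∂ν ≠ ⊤ := by
    rw [hD4]
    exact (ENNReal.add_lt_top.mpr ⟨ENNReal.mul_lt_top ENNReal.ofReal_lt_top hνlt,
      ENNReal.mul_lt_top ENNReal.ofReal_lt_top hTlt.lt_top⟩).ne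
  have hD5 : (∫⁻ x in Icc (0:ℝ) 1, P x ∂ν).toReal = (1/(2*s))*Mr + (c/(2*s))*Tr := by
    rw [hD4, ENNReal.toReal_add (ENNReal.mul_lt_top ENNReal.ofReal_lt_top hνlt).ne
      (ENNReal.mul_lt_top ENNReal.ofReal_lt_top hTlt.lt_top).ne,
      ENNReal.toReal_mul, ENNReal.toReal_mul,
      ENNReal.toReal_ofReal (div_nonneg zero_le_one (by linarith)),
      ENNReal.toReal_ofReal (div_nonneg hc.le (by linarith))]
  have h1pos : (0:ℝ) < 1/(2*s) := by
    apply div_pos one_pos; linarith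
  have h2pos : (0:ℝ) < c/(2*s) := div_pos hc (by linarith)
  have hbound : (1/(2*s))*Mr + (c/(2*s))*Tr ≤ 1/(2*s) + (c/(2*s))*(1/2 - α) := by
    have e1 : (c/(2*s))*Tr ≤ (c/(2*s))*(Mr - (1/2+α)) :=
      mul_le_mul_of_nonneg_left (by linarith) h2pos.le
    have e2 : (1/(2*s) + c/(2*s))*Mr ≤ (1/(2*s) + c/(2*s))*1 :=
      mul_le_mul_of_nonneg_left hMr1 (by linarith)
    nlinarith [e1, e2]
  have hI0 : ∫ x in Icc (0:ℝ) 1, 1/(4*p x) = (s/2) * Real.log (1+c) / c := by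
    rw [← int2 c hc (s/2)]
    apply setIntegral_congr_fun measurableSet_Icc
    intro x hx
    have h1cx : (0:ℝ) < 1 + c*x := by have := hx.1; positivity
    rw [hp]
    field_simp
    ring
  set L := Real.log (1+c) with hLdef
  have hL : (1+c)*L = c + c^2*(1/2-α) := by
    have h := hceq
    field_simp at h
    linear_combination (-1/2) * h
  have halg : (s/2)*L/c + (1/(2*s) + (c/(2*s))*(1/2 - α)) = s*L/c := by
    have hcne : c ≠ 0 := hc.ne'
    have hsne : s ≠ 0 := hs0.ne'
    field_simp
    linear_combination (-2*L) * hs2 + (-2) * hL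
  set I0r := ∫ x in Icc (0:ℝ) 1, 1/(4*p x) with hI0r
  set a1 := ∫ x in Icc (0:ℝ) 1, p x * fR x with ha1
  set a3 := (∫⁻ x in Icc (0:ℝ) 1, P x ∂ν).toReal with ha3
  have ha13 : a1 ≤ a3 := by
    rw [hD1, hD2, ha3]
    exact ENNReal.toReal_mono hPne hD3
  have hfinal : Jfun ν ≤ s * L / c := by
    calc Jfun ν ≤ I0r + a1 := hC
      _ ≤ I0r + a3 := by linarith
      _ = I0r + (1/(2*s)*Mr + c/(2*s)*Tr) := by rw [hD5]
      _ ≤ I0r + (1/(2*s) + c/(2*s)*(1/2 - α)) := by linarith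
      _ = s*L/c := by rw [hI0]; exact halg
  constructor
  · exact hfinal
  intro hJeq
  -- equality case
  have hE1 : Jfun ν = I0r + a1 := by
    have h1 : I0r + a1 ≤ I0r + a3 := by linarith
    have h2 : I0r + a3 ≤ s*L/c := by
      rw [hD5, hI0]; linarith [hbound, halg]
    linarith [hC]
  have hE2 : a1 = a3 := by
    have h2 : I0r + a3 ≤ s*L/c := by
      rw [hD5, hI0]; linarith [hbound, halg]
    linarith [hC]
  -- density identification on Icc
  have hdiff0 : (fun x => (1/(4*p x) + p x * fR x) - Real.sqrt (fR x))
      =ᵐ[volume.restrict (Icc (0:ℝ) 1)] 0 := by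
    have hnn : 0 ≤ᵐ[volume.restrict (Icc (0:ℝ) 1)]
        (fun x => (1/(4*p x) + p x * fR x) - Real.sqrt (fR x)) := by
      filter_upwards [hptw] with x hx
      simpa [sub_nonneg] using hx
    have hadd : IntegrableOn (fun x => 1/(4*p x) + p x * fR x) (Icc (0:ℝ) 1) volume :=
      hint1.add hint2
    have hIz : ∫ x in Icc (0:ℝ) 1, ((1/(4*p x) + p x * fR x) - Real.sqrt (fR x)) = 0 := by
      rw [integral_sub hadd hint3, integral_add hint1 hint2]
      have hJ : ∫ x in Icc (0:ℝ) 1, Real.sqrt (fR x) = Jfun ν := rfl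
      rw [hJ]
      linarith [hE1]
    exact (integral_eq_zero_iff_of_nonneg_ae hnn (hadd.sub hint3)).mp hIz
  have hfae : f =ᵐ[volume.restrict (Icc (0:ℝ) 1)]
      (fun x => ENNReal.ofReal ((1 + c) / (1 + c * x) ^ 2)) := by
    filter_upwards [hdiff0, ae_restrict_mem measurableSet_Icc, ae_restrict_of_ae hflt]
      with x h0 hmem hlt
    have hpx : 0 < p x := hppos x hmem.1
    have ht : 0 ≤ fR x := ENNReal.toReal_nonneg
    have hsq : Real.sqrt (fR x) ^ 2 = fR x := Real.sq_sqrt ht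
    have h0' : 1/(4*p x) + p x * fR x - Real.sqrt (fR x) = 0 := h0
    have hinv : 4*p x*(1/(4*p x)) = 1 := by
      rw [mul_one_div]
      exact div_self (by linarith : (0:ℝ) < 4*p x).ne'
    have h0'' : 4*p x*(1/(4*p x) + p x * fR x - Real.sqrt (fR x)) = 0 := by rw [h0']; ring
    have hexp : 4*p x*(1/(4*p x)) + 4*(p x)^2*(fR x) - 4*p x*Real.sqrt (fR x) = 0 := by
      linear_combination h0''
    rw [hinv] at hexp
    have hz : (2*p x*Real.sqrt (fR x) - 1)^2 = 0 := by
      linear_combination 4*(p x)^2 * hsq + hexp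
    have hz' : 2*p x*Real.sqrt (fR x) - 1 = 0 :=
      pow_eq_zero_iff (n := 2) (by norm_num) |>.mp hz
    have h1cx : (0:ℝ) < 1 + c*x := by have := hmem.1; positivity
    have hval : fR x = (1+c)/(1+c*x)^2 := by
      rw [← hsq]
      have hsx : Real.sqrt (fR x) = 1/(2*p x) := by
        rw [eq_div_iff (by linarith : (0:ℝ) < 2*p x).ne']
        linarith
      rw [hsx, hp]
      field_simp
      linear_combination hs2
    show f x = _
    rw [← ENNReal.ofReal_toReal hlt.ne]
    exact congrArg ENNReal.ofReal hval
  -- singular part vanishes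
  have hsing : ν.singularPart volume = 0 := by
    have hdec := (Measure.haveLebesgueDecomposition_add ν volume)
    have hsplit : ∫⁻ x in Icc (0:ℝ) 1, P x ∂ν
        = ∫⁻ x in Icc (0:ℝ) 1, P x ∂(ν.singularPart volume)
          + ∫⁻ x in Icc (0:ℝ) 1, P x ∂(volume.withDensity f) := by
      conv_lhs => rw [hdec]
      rw [Measure.restrict_add, lintegral_add_measure]
    have hwdne : ∫⁻ x in Icc (0:ℝ) 1, P x ∂(volume.withDensity f) ≠ ⊤ :=
      (lt_of_le_of_lt hD3 (lt_of_le_of_ne le_top hPne)).ne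
    have heq : ∫⁻ x in Icc (0:ℝ) 1, P x ∂(volume.withDensity f)
        = ∫⁻ x in Icc (0:ℝ) 1, P x ∂ν := by
      have h := hE2
      rw [hD1, hD2, ha3] at h
      exact (ENNReal.toReal_eq_toReal_iff' hwdne hPne).mp h
    have hzero : ∫⁻ x in Icc (0:ℝ) 1, P x ∂(ν.singularPart volume) = 0 := by
      rw [heq] at hsplit
      have h' : (∫⁻ x in Icc (0:ℝ) 1, P x ∂ν) + 0
          = (∫⁻ x in Icc (0:ℝ) 1, P x ∂ν) + ∫⁻ x in Icc (0:ℝ) 1, P x ∂(ν.singularPart volume) := by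
        rw [add_zero, add_comm]
        exact hsplit
      exact ((ENNReal.add_right_inj hPne).mp h').symm
    have hae := (lintegral_eq_zero_iff hPm).mp hzero
    have hsIcc : ν.singularPart volume (Icc (0:ℝ) 1) = 0 := by
      have hmeas0 : (ν.singularPart volume).restrict (Icc (0:ℝ) 1) {x | ¬ P x = 0} = 0 := by
        have := ae_iff.mp hae
        simpa using this
      have hsub : Icc (0:ℝ) 1 ⊆ {x | ¬ P x = 0} := by
        intro x hx
        simp only [mem_setOf_eq, hP]
        exact ne_of_gt (ENNReal.ofReal_pos.mpr (hppos x hx.1))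
      apply le_antisymm _ zero_le
      calc ν.singularPart volume (Icc (0:ℝ) 1)
          = (ν.singularPart volume).restrict (Icc (0:ℝ) 1) (Icc (0:ℝ) 1) :=
            (Measure.restrict_apply_self _ _).symm
        _ ≤ (ν.singularPart volume).restrict (Icc (0:ℝ) 1) {x | ¬ P x = 0} :=
            measure_mono hsub
        _ = 0 := hmeas0
    have hscompl : ν.singularPart volume (Icc (0:ℝ) 1)ᶜ = 0 := by
      apply le_antisymm _ zero_le
      calc ν.singularPart volume (Icc (0:ℝ) 1)ᶜ
          ≤ ν (Icc (0:ℝ) 1)ᶜ := Measure.le_iff'.mp (Measure.singularPart_le ν volume) _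
        _ = 0 := hcompl
    apply Measure.measure_univ_eq_zero.mp
    rw [← measure_add_measure_compl (measurableSet_Icc (a := (0:ℝ)) (b := 1)), hsIcc, hscompl,
      add_zero]
  have hν_wd : ν = volume.withDensity f := by
    conv_lhs => rw [Measure.haveLebesgueDecomposition_add ν volume]
    rw [hsing, zero_add]
  have hoff : f =ᵐ[volume.restrict (Icc (0:ℝ) 1)ᶜ] 0 := by
    have h0 : (volume.withDensity f) (Icc (0:ℝ) 1)ᶜ = 0 := by rw [← hν_wd]; exact hcompl
    rw [withDensity_apply _ measurableSet_Icc.compl] at h0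
    exact (lintegral_eq_zero_iff hfm).mp h0
  have hind : f =ᵐ[volume]
      (Icc (0:ℝ) 1).indicator (fun x => ENNReal.ofReal ((1 + c) / (1 + c * x) ^ 2)) := by
    rw [← Measure.restrict_add_restrict_compl (μ := volume) (measurableSet_Icc (a := (0:ℝ)) (b := 1))]
    apply ae_add_measure_iff.mpr
    constructor
    · filter_upwards [hfae, ae_restrict_mem measurableSet_Icc] with x h hm
      rw [h, indicator_of_mem hm]
    · filter_upwards [hoff, ae_restrict_mem measurableSet_Icc.compl] with x h hm
      rw [indicator_of_notMem hm]
      simpa using h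
  rw [hν_wd, withDensity_congr_ae hind]
  exact (muAlpha_eq' c).symm

/-- With `c = c_α` the unique positive solution of `((1+c)/c)(1 − log(1+c)/c) = 1/2 + α`,
the measure `μ_α` with density `(1+c)/(1+cx)²` belongs to `B_α`, satisfies
`J(μ_α) = √(1+c)·log(1+c)/c = J_α`, and is the unique maximizer of `J` over `B_α`. -/
theorem stmt11 (α : ℝ) (hα : α ∈ Set.Ioo (0 : ℝ) (1 / 2)) (c : ℝ) (hc : 0 < c)
    (hceq : ((1 + c) / c) * (1 - Real.log (1 + c) / c) = 1 / 2 + α) :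
    memB α (muAlpha c) ∧
    Jfun (muAlpha c) = Real.sqrt (1 + c) * Real.log (1 + c) / c ∧
    Jfun (muAlpha c) = Jsup α ∧
    ∀ ν : Measure ℝ, memB α ν → Jfun ν = Jsup α → ν = muAlpha c := by
  have hmem : memB α (muAlpha c) := by
    refine ⟨muAlpha_compl c, ?_, ?_⟩
    · have h1 : (1:ℝ) ∈ Icc (0:ℝ) 1 := right_mem_Icc.mpr zero_le_one
      rw [show Icc (0:ℝ) 1 = Icc 0 (1:ℝ) from rfl, muAlpha_cdf c hc h1]
      rw [show (1+c)*1/(1+c*1) = (1:ℝ) by field_simp]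
      simp
    · have harea : ∫ x in Icc (0:ℝ) 1, ((muAlpha c) (Icc 0 x)).toReal = 1/2 + α := by
        rw [← hceq, ← int3 c hc]
        apply setIntegral_congr_fun measurableSet_Icc
        intro x hx
        have h1cx : (0:ℝ) < 1 + c*x := by have := hx.1; positivity
        show ((muAlpha c) (Icc 0 x)).toReal = _
        rw [muAlpha_cdf c hc hx, ENNReal.toReal_ofReal
          (div_nonneg (by nlinarith [hx.1]) h1cx.le)]
      rw [harea]
  have hJval : Jfun (muAlpha c) = Real.sqrt (1 + c) * Real.log (1 + c) / c := by
    rw [Jfun_muAlpha c hc, int2 c hc (Real.sqrt (1+c))]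
  have hbdd : ∀ ν : Measure ℝ, memB α ν →
      Jfun ν ≤ Real.sqrt (1 + c) * Real.log (1 + c) / c :=
    fun ν h => (main_bound α c hα hc hceq ν h).1
  have hbddA : BddAbove (Set.range (fun μ : {μ : Measure ℝ // memB α μ} => Jfun μ.1)) := by
    refine ⟨Real.sqrt (1 + c) * Real.log (1 + c) / c, ?_⟩
    rintro y ⟨μ, rfl⟩
    exact hbdd μ.1 μ.2
  haveI hne : Nonempty {μ : Measure ℝ // memB α μ} := ⟨⟨muAlpha c, hmem⟩⟩
  have hJsup : Jsup α = Real.sqrt (1 + c) * Real.log (1 + c) / c := by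
    apply le_antisymm
    · exact ciSup_le fun μ => hbdd μ.1 μ.2
    · rw [← hJval]
      exact le_ciSup hbddA (⟨muAlpha c, hmem⟩ : {μ : Measure ℝ // memB α μ})
  refine ⟨hmem, hJval, by rw [hJval, hJsup], ?_⟩
  intro ν hν hJν
  exact (main_bound α c hα hc hceq ν hν).2 (by rw [hJν, hJsup])
end
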